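/- arXiv:1908.09648 — 8 statements merged into one kernel-verified Lean document; each statement's English description precedes it below -/
import Mathlib

section
/- Let P = {x_i, x_{i+1}, …, x_{i'}} be a nonempty set of points in ℝ² with x_j ≺ x_k for all j < k. Then the continuous 1-center cost of P satisfies min_{y ∈ ℝ²} max_{x ∈ P} ‖x − y‖ = (1/2)·‖x_i − x_{i'}‖, i.e., the radius of the minimum enclosing ball of P equals half the distance between its two extreme points. -/
noncomputable section

abbrev Pt : Type := EuclideanSpace ℝ (Fin 2)

/-- Strict Pareto dominance on ℝ²: `y ≺ z` iff `y¹ < z¹` and `y² > z²`. -/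
def prec (y z : Pt) : Prop := y 0 < z 0 ∧ z 1 < y 1

/-! If `⟪a - p, b - p⟫ ≤ 0`, then `p` sees `[a, b]` at an angle of at least `π/2`, so by Thales
it lies in the ball with diameter `[a, b]`. Each `x_j` of the cluster sees `[x_i, x_{i'}]` this
way, because each coordinate of `x_j` lies between those of `x_i` and `x_{i'}`. So that ball
encloses `P`, and by the triangle inequality no ball containing `x_i` and `x_{i'}` is smaller. -/

open Finset

open scoped RealInnerProductSpace

lemma EuclideanSpace.inner_sub_sub_nonpos_of_forall_mul_nonpos {ι : Type*} [Fintype ι]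
    {a b c : EuclideanSpace ℝ ι} (h : ∀ k, (a k - b k) * (c k - b k) ≤ 0) :
    ⟪a - b, c - b⟫ ≤ 0 := by
  rw [PiLp.inner_apply]
  exact sum_nonpos fun k _ => by simpa [mul_comm] using h k

lemma dist_midpoint_le_half_dist_of_inner_nonpos {E : Type*} [NormedAddCommGroup E]
    [InnerProductSpace ℝ E] {a b p : E} (h : ⟪a - p, b - p⟫ ≤ 0) :
    dist p (midpoint ℝ a b) ≤ dist a b / 2 := by
  have hsq : ‖(a - p) + (b - p)‖ ^ 2 ≤ ‖(a - p) - (b - p)‖ ^ 2 := by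
    linarith [norm_add_sq_real (a - p) (b - p), norm_sub_sq_real (a - p) (b - p)]
  calc dist p (midpoint ℝ a b) = ‖(a - p) + (b - p)‖ / 2 := by
        rw [dist_comm, dist_eq_norm, midpoint_eq_smul_add, invOf_eq_inv,
          show (2 : ℝ)⁻¹ • (a + b) - p = (2 : ℝ)⁻¹ • ((a - p) + (b - p)) by module, norm_smul]
        norm_num [div_eq_inv_mul]
    _ ≤ ‖(a - p) - (b - p)‖ / 2 := by
        gcongr; exact (pow_le_pow_iff_left₀ (norm_nonneg _) (norm_nonneg _) two_ne_zero).1 hsq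
    _ = dist a b / 2 := by rw [sub_sub_sub_cancel_right, dist_eq_norm]

theorem iInf_sup'_dist_eq_half_dist {ι E : Type*} [NormedAddCommGroup E] [InnerProductSpace ℝ E]
    (f : ι → E) {s : Finset ι} (hs : s.Nonempty) {i i' : ι} (hi : i ∈ s) (hi' : i' ∈ s)
    (h : ∀ j ∈ s, ⟪f i - f j, f i' - f j⟫ ≤ 0) :
    ⨅ y, s.sup' hs (fun j => dist (f j) y) = dist (f i) (f i') / 2 := by
  have lower (y : E) : dist (f i) (f i') / 2 ≤ s.sup' hs (fun j => dist (f j) y) := by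
    have := dist_triangle_right (f i) (f i') y
    have := le_sup' (fun j => dist (f j) y) hi
    have := le_sup' (fun j => dist (f j) y) hi'
    linarith
  refine le_antisymm ?_ (le_ciInf lower)
  refine (ciInf_le ⟨_, Set.forall_mem_range.2 lower⟩ (midpoint ℝ (f i) (f i'))).trans ?_
  exact sup'_le _ _ fun j hj => dist_midpoint_le_half_dist_of_inner_nonpos (h j hj)

lemma weak_prec_of_le {N : ℕ} {x : ℕ → Pt} (mono : ∀ i j : ℕ, i < j → j ≤ N → prec (x i) (x j))
    {i j : ℕ} (hij : i ≤ j) (hj : j ≤ N) : x i 0 ≤ x j 0 ∧ x j 1 ≤ x i 1 := by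
  rcases hij.eq_or_lt with rfl | hlt
  · exact ⟨le_rfl, le_rfl⟩
  · exact ⟨(mono i j hlt hj).1.le, (mono i j hlt hj).2.le⟩

/-- For a nonempty interval cluster `P = {x_i, …, x_{i'}}` of a 2d Pareto front,
the continuous 1-center cost `min_{y ∈ ℝ²} max_{x ∈ P} ‖x − y‖` equals
`(1/2)·‖x_i − x_{i'}‖`. -/
theorem continuous_one_center_cost (N : ℕ) (x : ℕ → Pt)
    (mono : ∀ i j : ℕ, i < j → j ≤ N → prec (x i) (x j))
    (i i' : ℕ) (hii : i ≤ i') (hN : i' ≤ N) :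
    (⨅ y : Pt, (Finset.Icc i i').sup' (Finset.nonempty_Icc.mpr hii)
        (fun j => dist (x j) y))
      = (1 / 2) * dist (x i) (x i') := by
  rw [one_div_mul_eq_div]
  refine iInf_sup'_dist_eq_half_dist x _ (left_mem_Icc.2 hii) (right_mem_Icc.2 hii) ?_
  intro j hj
  obtain ⟨hij, hji'⟩ := mem_Icc.1 hj
  obtain ⟨h0, h1⟩ := weak_prec_of_le mono hij (hji'.trans hN)
  obtain ⟨h0', h1'⟩ := weak_prec_of_le mono hji' hN
  refine EuclideanSpace.inner_sub_sub_nonpos_of_forall_mul_nonpos fun k => ?_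
  fin_cases k
  · exact mul_nonpos_of_nonpos_of_nonneg (by simpa using h0) (by simpa using h0')
  · exact mul_nonpos_of_nonneg_of_nonpos (by simpa using h1) (by simpa using h1')
end
end

section
/- Let P = {x_i, …, x_{i'}} ⊂ ℝ² with x_j ≺ x_k for all j < k, and let x_i, x_{i'} be the extreme points. Then the discrete 1-center cost satisfies min_{y ∈ P} max_{x ∈ P} ‖x − y‖ = min_{j ∈ [i, i']} max(‖x_j − x_i‖, ‖x_j − x_{i'}‖). -/
noncomputable section

lemma dist_le_of_coord (a b c : Pt) (h0 : |a 0 - c 0| ≤ |b 0 - c 0|)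
    (h1 : |a 1 - c 1| ≤ |b 1 - c 1|) : dist a c ≤ dist b c := by
  rw [EuclideanSpace.dist_eq, EuclideanSpace.dist_eq]
  apply Real.sqrt_le_sqrt
  simp only [Fin.sum_univ_two, Real.dist_eq]
  have := abs_nonneg (a 0 - c 0)
  have := abs_nonneg (a 1 - c 1)
  nlinarith

/-- For a nonempty interval cluster `P = {x_i, …, x_{i'}}` of a 2d Pareto front,
the discrete 1-center cost `min_{y ∈ P} max_{x ∈ P} ‖x − y‖` equals
`min_{j ∈ [i,i']} max(‖x_j − x_i‖, ‖x_j − x_{i'}‖)`. -/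
theorem discrete_one_center_cost (N : ℕ) (x : ℕ → Pt)
    (mono : ∀ i j : ℕ, i < j → j ≤ N → prec (x i) (x j))
    (i i' : ℕ) (hii : i ≤ i') (hN : i' ≤ N) :
    ((Finset.Icc i i').inf' (Finset.nonempty_Icc.mpr hii)
        (fun j => (Finset.Icc i i').sup' (Finset.nonempty_Icc.mpr hii)
          (fun k => dist (x k) (x j))))
      = (Finset.Icc i i').inf' (Finset.nonempty_Icc.mpr hii)
          (fun j => max (dist (x j) (x i)) (dist (x j) (x i'))) := by
  have wmono : ∀ a b : ℕ, a ≤ b → b ≤ N → x a 0 ≤ x b 0 ∧ x b 1 ≤ x a 1 := by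
    intro a b hab hbN
    rcases eq_or_lt_of_le hab with rfl | h
    · exact ⟨le_refl _, le_refl _⟩
    · exact ⟨(mono a b h hbN).1.le, (mono a b h hbN).2.le⟩
  apply Finset.inf'_congr _ rfl
  intro j hj
  rw [Finset.mem_Icc] at hj
  apply le_antisymm
  · apply Finset.sup'_le
    intro k hk
    rw [Finset.mem_Icc] at hk
    rcases le_total k j with hkj | hjk
    · refine le_trans ?_ (le_max_left _ _)
      rw [dist_comm (x j)]
      apply dist_le_of_coord
      · obtain ⟨u1, u2⟩ := wmono i k hk.1 (le_trans (le_trans hkj hj.2) hN)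
        obtain ⟨v1, v2⟩ := wmono k j hkj (le_trans hj.2 hN)
        rw [abs_sub_comm, abs_sub_comm (x i 0)]
        rw [abs_of_nonneg (by linarith), abs_of_nonneg (by linarith)]
        linarith
      · obtain ⟨u1, u2⟩ := wmono i k hk.1 (le_trans (le_trans hkj hj.2) hN)
        obtain ⟨v1, v2⟩ := wmono k j hkj (le_trans hj.2 hN)
        rw [abs_of_nonneg (by linarith), abs_of_nonneg (by linarith)]
        linarith
    · refine le_trans ?_ (le_max_right _ _)
      rw [dist_comm (x j)]
      apply dist_le_of_coord
      · obtain ⟨u1, u2⟩ := wmono k i' hk.2 hN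
        obtain ⟨v1, v2⟩ := wmono j k hjk (le_trans hk.2 hN)
        rw [abs_of_nonneg (by linarith), abs_of_nonneg (by linarith)]
        linarith
      · obtain ⟨u1, u2⟩ := wmono k i' hk.2 hN
        obtain ⟨v1, v2⟩ := wmono j k hjk (le_trans hk.2 hN)
        rw [abs_sub_comm, abs_sub_comm (x i' 1)]
        rw [abs_of_nonneg (by linarith), abs_of_nonneg (by linarith)]
        linarith
  · apply max_le
    · rw [dist_comm]
      exact Finset.le_sup' (f := fun k => dist (x k) (x j)) (Finset.mem_Icc.mpr ⟨le_refl i, hii⟩)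
    · rw [dist_comm]
      exact Finset.le_sup' (f := fun k => dist (x k) (x j)) (Finset.mem_Icc.mpr ⟨hii, le_refl i'⟩)
end
end

section
/- Let E = {x₁,…,x_N} ⊂ ℝ² with x_i ≺ x_j for all i < j, and let K ≥ 1. For the continuous K-center problem on E (minimize over partitions of E into K subsets the maximum over subsets of the continuous 1-center cost), there exists an optimal partition in which every cluster is an interval of consecutive indices, i.e., of the form C_{i,i'} = {x_j : i ≤ j ≤ i'}. -/
noncomputable section

/-- Continuous 1-center cost of a cluster of indices (0 for the empty cluster). -/
def cCost (x : ℕ → Pt) (P : Finset ℕ) : ℝ :=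
  if h : P.Nonempty then ⨅ y : Pt, P.sup' h (fun j => dist (x j) y) else 0

/-- `π` is a partition of `S` into `k` nonempty parts. -/
def IsPartitionOf (π : Finset (Finset ℕ)) (S : Finset ℕ) (k : ℕ) : Prop :=
  (∀ p ∈ π, p.Nonempty) ∧ (π : Set (Finset ℕ)).PairwiseDisjoint id ∧
    π.sup id = S ∧ π.card = k

/-- K-center objective of a partition: maximum cluster cost. -/
def kObj (cost : Finset ℕ → ℝ) (π : Finset (Finset ℕ)) : ℝ :=
  if h : π.Nonempty then π.sup' h cost else 0

namespace KCenterAux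

/-- minimum of a finset of naturals (0 if empty). -/
def mn (p : Finset ℕ) : ℕ := if h : p.Nonempty then p.min' h else 0

lemma mn_mem {p : Finset ℕ} (h : p.Nonempty) : mn p ∈ p := by
  rw [mn, dif_pos h]; exact p.min'_mem h

lemma mn_le {p : Finset ℕ} {a : ℕ} (ha : a ∈ p) : mn p ≤ a := by
  rw [mn, dif_pos ⟨a, ha⟩]; exact Finset.min'_le _ _ ha

/-- end of the interval starting at `s` when cutting `[1,N]` at the elements of `S`. -/
def nxt (S : Finset ℕ) (N s : ℕ) : ℕ :=
  if h : (S.filter fun t => s < t).Nonempty then (S.filter fun t => s < t).min' h - 1 else N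

lemma mem_iv_iff {S : Finset ℕ} {N s n : ℕ} (hS : S ⊆ Finset.Icc 1 N) (hs : s ∈ S) :
    n ∈ Finset.Icc s (nxt S N s) ↔ s ≤ n ∧ n ≤ N ∧ ∀ t ∈ S, s < t → n < t := by
  have hsN : s ≤ N := (Finset.mem_Icc.1 (hS hs)).2
  rw [nxt]
  by_cases h : (S.filter fun t => s < t).Nonempty
  · rw [dif_pos h]
    set m := (S.filter fun t => s < t).min' h with hm
    have hmmem := Finset.min'_mem _ h
    rw [Finset.mem_filter] at hmmem
    have hmN : m ≤ N := (Finset.mem_Icc.1 (hS hmmem.1)).2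
    have hmin : ∀ t ∈ S, s < t → m ≤ t := fun t ht hst =>
      Finset.min'_le _ _ (Finset.mem_filter.2 ⟨ht, hst⟩)
    rw [Finset.mem_Icc]
    constructor
    · rintro ⟨h1, h2⟩
      refine ⟨h1, by omega, fun t ht hst => ?_⟩
      have := hmin t ht hst
      have := hmmem.2
      omega
    · rintro ⟨h1, h2, h3⟩
      have := h3 m hmmem.1 hmmem.2
      exact ⟨h1, by omega⟩
  · rw [dif_neg h, Finset.mem_Icc]
    constructor
    · rintro ⟨h1, h2⟩
      exact ⟨h1, h2, fun t ht hst =>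
        absurd (⟨t, Finset.mem_filter.2 ⟨ht, hst⟩⟩ : (S.filter fun t => s < t).Nonempty) h⟩
    · rintro ⟨h1, h2, _⟩; exact ⟨h1, h2⟩

/-- the interval partition with starts `S`. -/
def ip (S : Finset ℕ) (N : ℕ) : Finset (Finset ℕ) :=
  S.image fun s => Finset.Icc s (nxt S N s)

lemma self_mem_iv {S : Finset ℕ} {N s : ℕ} (hS : S ⊆ Finset.Icc 1 N) (hs : s ∈ S) :
    s ∈ Finset.Icc s (nxt S N s) :=
  (mem_iv_iff hS hs).2 ⟨le_rfl, (Finset.mem_Icc.1 (hS hs)).2, fun _ _ h => h⟩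

lemma ip_isPartition {S : Finset ℕ} {N : ℕ} (hS : S ⊆ Finset.Icc 1 N) (h1 : 1 ∈ S) :
    IsPartitionOf (ip S N) (Finset.Icc 1 N) S.card := by
  refine ⟨?_, ?_, ?_, ?_⟩
  · rintro p hp
    obtain ⟨s, hs, rfl⟩ := Finset.mem_image.1 hp
    exact ⟨s, self_mem_iv hS hs⟩
  · intro p hp q hq hpq
    rw [Finset.mem_coe, ip, Finset.mem_image] at hp hq
    obtain ⟨s, hs, rfl⟩ := hp
    obtain ⟨s', hs', rfl⟩ := hq
    simp only [Function.onFun, id_eq]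
    rw [Finset.disjoint_left]
    intro n hn hn'
    rw [mem_iv_iff hS hs] at hn
    rw [mem_iv_iff hS hs'] at hn'
    rcases lt_trichotomy s s' with h | h | h
    · exact absurd hn'.1 (not_le.2 (hn.2.2 s' hs' h))
    · exact hpq (by rw [h])
    · exact absurd hn.1 (not_le.2 (hn'.2.2 s hs h))
  · apply le_antisymm
    · apply Finset.sup_le
      intro p hp
      obtain ⟨s, hs, rfl⟩ := Finset.mem_image.1 hp
      rw [id_eq, Finset.le_iff_subset]
      intro n hn
      rw [mem_iv_iff hS hs] at hn
      have := (Finset.mem_Icc.1 (hS hs)).1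
      exact Finset.mem_Icc.2 ⟨by omega, hn.2.1⟩
    · rw [Finset.le_iff_subset]
      intro n hn
      have hn' := Finset.mem_Icc.1 hn
      set F := S.filter fun t => t ≤ n with hF
      have hFne : F.Nonempty := ⟨1, Finset.mem_filter.2 ⟨h1, hn'.1⟩⟩
      set s := F.max' hFne with hsdef
      have hsmem := Finset.max'_mem F hFne
      rw [Finset.mem_filter] at hsmem
      have hmem : n ∈ Finset.Icc s (nxt S N s) := by
        rw [mem_iv_iff hS hsmem.1]
        refine ⟨hsmem.2, hn'.2, fun t ht hst => ?_⟩
        by_contra hc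
        push_neg at hc
        have htF : t ∈ F := Finset.mem_filter.2 ⟨ht, hc⟩
        have := Finset.le_max' F t htF
        omega
      have hle : (Finset.Icc s (nxt S N s) : Finset ℕ) ≤ (ip S N).sup id :=
        Finset.le_sup (f := id) (Finset.mem_image_of_mem _ hsmem.1)
      exact Finset.le_iff_subset.1 hle hmem
  · rw [ip]
    apply Finset.card_image_of_injOn
    intro s hs s' hs' he
    have he' : Finset.Icc s (nxt S N s) = Finset.Icc s' (nxt S N s') := he
    have h1' := self_mem_iv hS (Finset.mem_coe.1 hs)
    rw [he'] at h1'
    have h2' := self_mem_iv hS (Finset.mem_coe.1 hs')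
    rw [← he'] at h2'
    have := (Finset.mem_Icc.1 h1').1
    have := (Finset.mem_Icc.1 h2').1
    omega

section Geometry

variable {N : ℕ} {x : ℕ → Pt}

lemma coord0 (mono : ∀ i j : ℕ, i < j → j ≤ N → prec (x i) (x j))
    {i j : ℕ} (hij : i ≤ j) (hj : j ≤ N) : x i 0 ≤ x j 0 := by
  rcases hij.lt_or_eq with h | h
  · exact (mono i j h hj).1.le
  · rw [h]

lemma coord1 (mono : ∀ i j : ℕ, i < j → j ≤ N → prec (x i) (x j))
    {i j : ℕ} (hij : i ≤ j) (hj : j ≤ N) : x j 1 ≤ x i 1 := by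
  rcases hij.lt_or_eq with h | h
  · exact (mono i j h hj).2.le
  · rw [h]

/-- midpoint of `x a` and `x b`. -/
def ctr (x : ℕ → Pt) (a b : ℕ) : Pt := (2:ℝ)⁻¹ • (x a + x b)

lemma key_half (mono : ∀ i j : ℕ, i < j → j ≤ N → prec (x i) (x j))
    {a j b : ℕ} (h1 : a ≤ j) (h2 : j ≤ b) (h3 : b ≤ N) :
    dist (x j) (ctr x a b) ≤ dist (x a) (x b) / 2 := by
  have hjN : j ≤ N := le_trans h2 h3
  have e00 : x a 0 ≤ x j 0 := coord0 mono h1 hjN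
  have e01 : x j 0 ≤ x b 0 := coord0 mono h2 h3
  have e10 : x b 1 ≤ x j 1 := coord1 mono h2 h3
  have e11 : x j 1 ≤ x a 1 := coord1 mono h1 hjN
  have c0 : ctr x a b 0 = (x a 0 + x b 0) / 2 := by
    simp [ctr, PiLp.smul_apply, PiLp.add_apply]; ring
  have c1 : ctr x a b 1 = (x a 1 + x b 1) / 2 := by
    simp [ctr, PiLp.smul_apply, PiLp.add_apply]; ring
  rw [EuclideanSpace.dist_eq, EuclideanSpace.dist_eq, Fin.sum_univ_two, Fin.sum_univ_two]
  simp only [Real.dist_eq, sq_abs, c0, c1]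
  have key : (x j 0 - (x a 0 + x b 0) / 2) ^ 2 + (x j 1 - (x a 1 + x b 1) / 2) ^ 2 ≤
      ((x a 0 - x b 0) ^ 2 + (x a 1 - x b 1) ^ 2) / 4 := by
    nlinarith [mul_nonneg (sub_nonneg.2 e00) (sub_nonneg.2 e01),
      mul_nonneg (sub_nonneg.2 e10) (sub_nonneg.2 e11)]
  have hD : (0:ℝ) ≤ (x a 0 - x b 0) ^ 2 + (x a 1 - x b 1) ^ 2 := by positivity
  calc Real.sqrt ((x j 0 - (x a 0 + x b 0) / 2) ^ 2 + (x j 1 - (x a 1 + x b 1) / 2) ^ 2)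
      ≤ Real.sqrt (((x a 0 - x b 0) ^ 2 + (x a 1 - x b 1) ^ 2) / 4) := Real.sqrt_le_sqrt key
    _ = Real.sqrt ((x a 0 - x b 0) ^ 2 + (x a 1 - x b 1) ^ 2) / 2 := by
        rw [Real.sqrt_div hD, show (4:ℝ) = 2 ^ 2 by norm_num,
          Real.sqrt_sq (by norm_num : (0:ℝ) ≤ 2)]

lemma dist_mono (mono : ∀ i j : ℕ, i < j → j ≤ N → prec (x i) (x j))
    {a s e b : ℕ} (h1 : a ≤ s) (h2 : s ≤ e) (h3 : e ≤ b) (h4 : b ≤ N) :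
    dist (x s) (x e) ≤ dist (x a) (x b) := by
  have t1 : dist (x s) (ctr x a b) ≤ dist (x a) (x b) / 2 :=
    key_half mono h1 (le_trans h2 h3) h4
  have t2 : dist (x e) (ctr x a b) ≤ dist (x a) (x b) / 2 :=
    key_half mono (le_trans h1 h2) h3 h4
  have t3 := dist_triangle (x s) (ctr x a b) (x e)
  rw [dist_comm (ctr x a b) (x e)] at t3
  linarith

lemma cCost_le {P : Finset ℕ} (h : P.Nonempty) {y : Pt} {r : ℝ}
    (hr : ∀ j ∈ P, dist (x j) y ≤ r) : cCost x P ≤ r := by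
  rw [cCost, dif_pos h]
  have hbdd : BddBelow (Set.range fun z : Pt => P.sup' h fun j => dist (x j) z) := by
    refine ⟨0, ?_⟩
    rintro r' ⟨z, rfl⟩
    obtain ⟨j, hj⟩ := h
    dsimp only
    exact le_trans dist_nonneg (Finset.le_sup' (fun j => dist (x j) z) hj)
  exact ciInf_le_of_le hbdd y (Finset.sup'_le _ _ hr)

lemma le_cCost {P : Finset ℕ} {a b : ℕ} (ha : a ∈ P) (hb : b ∈ P) :
    dist (x a) (x b) / 2 ≤ cCost x P := by
  have h : P.Nonempty := ⟨a, ha⟩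
  rw [cCost, dif_pos h]
  refine le_ciInf fun y => ?_
  have h1 : dist (x a) y ≤ P.sup' h fun j => dist (x j) y := Finset.le_sup' (fun j => dist (x j) y) ha
  have h2 : dist (x b) y ≤ P.sup' h fun j => dist (x j) y := Finset.le_sup' (fun j => dist (x j) y) hb
  have h3 := dist_triangle (x a) y (x b)
  rw [dist_comm y (x b)] at h3
  linarith

end Geometry

end KCenterAux

open KCenterAux in
/-- For the continuous K-center problem on a 2d Pareto front `x₁,…,x_N`,
there exists an optimal partition all of whose clusters are intervals of
consecutive indices. -/
theorem continuous_kcenter_interval_optimal (N K : ℕ) (hK : 1 ≤ K) (hKN : K ≤ N)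
    (x : ℕ → Pt) (mono : ∀ i j : ℕ, i < j → j ≤ N → prec (x i) (x j)) :
    ∃ π : Finset (Finset ℕ), IsPartitionOf π (Finset.Icc 1 N) K ∧
      (∀ p ∈ π, ∃ i i' : ℕ, p = Finset.Icc i i') ∧
      (∀ π' : Finset (Finset ℕ), IsPartitionOf π' (Finset.Icc 1 N) K →
        kObj (cCost x) π ≤ kObj (cCost x) π') := by
  classical
  have hN1 : 1 ≤ N := le_trans hK hKN
  set T : Finset (Finset (Finset ℕ)) :=
    ((Finset.Icc 1 N).powerset.powerset).filter
      (fun π => IsPartitionOf π (Finset.Icc 1 N) K) with hT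
  have hmemT : ∀ π', IsPartitionOf π' (Finset.Icc 1 N) K → π' ∈ T := by
    intro π' hπ'
    rw [hT, Finset.mem_filter]
    refine ⟨Finset.mem_powerset.2 ?_, hπ'⟩
    intro p hp
    rw [Finset.mem_powerset]
    have hle : id p ≤ π'.sup id := Finset.le_sup hp
    rw [hπ'.2.2.1] at hle
    exact Finset.le_iff_subset.1 hle
  have hTne : T.Nonempty := by
    refine ⟨ip (Finset.Icc 1 K) N, hmemT _ ?_⟩
    have hsub : Finset.Icc 1 K ⊆ Finset.Icc 1 N := Finset.Icc_subset_Icc le_rfl hKN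
    have h1 : 1 ∈ Finset.Icc 1 K := Finset.mem_Icc.2 ⟨le_rfl, hK⟩
    have := ip_isPartition hsub h1
    rwa [Nat.card_Icc, Nat.add_sub_cancel] at this
  obtain ⟨π₀, hπ₀T, hmin⟩ := T.exists_min_image (kObj (cCost x)) hTne
  have hπ₀ : IsPartitionOf π₀ (Finset.Icc 1 N) K := (Finset.mem_filter.1 hπ₀T).2
  obtain ⟨hne₀, hdisj₀, hsup₀, hcard₀⟩ := hπ₀
  have hπ₀ne : π₀.Nonempty := Finset.card_pos.1 (by rw [hcard₀]; exact hK)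
  have hsub₀ : ∀ p ∈ π₀, p ⊆ Finset.Icc 1 N := by
    intro p hp
    have hle : id p ≤ π₀.sup id := Finset.le_sup hp
    rw [hsup₀] at hle
    exact Finset.le_iff_subset.1 hle
  set S : Finset ℕ := π₀.image mn with hSdef
  have hS : S ⊆ Finset.Icc 1 N := by
    intro s hsmem
    obtain ⟨p, hp, rfl⟩ := Finset.mem_image.1 hsmem
    exact hsub₀ p hp (mn_mem (hne₀ p hp))
  have h1S : 1 ∈ S := by
    have h1mem : (1:ℕ) ∈ π₀.sup id := by
      rw [hsup₀]; exact Finset.mem_Icc.2 ⟨le_rfl, hN1⟩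
    rw [Finset.mem_sup] at h1mem
    obtain ⟨p, hp, h1p⟩ := h1mem
    have hle : mn p ≤ 1 := mn_le h1p
    have hge : 1 ≤ mn p := (Finset.mem_Icc.1 (hsub₀ p hp (mn_mem (hne₀ p hp)))).1
    rw [hSdef, Finset.mem_image]
    exact ⟨p, hp, by omega⟩
  have hScard : S.card = K := by
    rw [hSdef, Finset.card_image_of_injOn, hcard₀]
    intro p hp q hq hpq
    by_contra hne
    have hd := hdisj₀ hp hq hne
    simp only [Function.onFun, id_eq] at hd
    exact (Finset.disjoint_left.1 hd (mn_mem (hne₀ p (Finset.mem_coe.1 hp))))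
      (hpq ▸ mn_mem (hne₀ q (Finset.mem_coe.1 hq)))
  refine ⟨ip S N, ?_, ?_, ?_⟩
  · have := ip_isPartition hS h1S
    rwa [hScard] at this
  · intro p hp
    obtain ⟨s, hs, rfl⟩ := Finset.mem_image.1 hp
    exact ⟨s, nxt S N s, rfl⟩
  · intro π' hπ'
    refine le_trans ?_ (hmin π' (hmemT π' hπ'))
    have hipne : (ip S N).Nonempty := ⟨_, Finset.mem_image_of_mem _ h1S⟩
    rw [kObj, dif_pos hipne, kObj, dif_pos hπ₀ne]
    apply Finset.sup'_le
    intro p hp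
    obtain ⟨s, hsS, rfl⟩ := Finset.mem_image.1 hp
    set e := nxt S N s with he
    have hse : s ∈ Finset.Icc s e := self_mem_iv hS hsS
    have hsIcc := Finset.mem_Icc.1 (hS hsS)
    have heiv : e ∈ Finset.Icc s e :=
      Finset.mem_Icc.2 ⟨(Finset.mem_Icc.1 hse).2, le_rfl⟩
    have hef := (mem_iv_iff hS hsS).1 heiv
    have heIcc : e ∈ π₀.sup id := by
      rw [hsup₀]; exact Finset.mem_Icc.2 ⟨le_trans hsIcc.1 hef.1, hef.2.1⟩
    rw [Finset.mem_sup] at heIcc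
    obtain ⟨q, hq, heq⟩ := heIcc
    have hqne : q.Nonempty := hne₀ q hq
    have haq : mn q ∈ q := mn_mem hqne
    have hbq : q.max' hqne ∈ q := q.max'_mem hqne
    have hae : mn q ≤ e := mn_le heq
    have heb : e ≤ q.max' hqne := Finset.le_max' q e heq
    have hbN : q.max' hqne ≤ N := (Finset.mem_Icc.1 (hsub₀ q hq hbq)).2
    have has : mn q ≤ s := by
      by_contra hc
      push_neg at hc
      have haS : mn q ∈ S := Finset.mem_image_of_mem mn hq
      have := hef.2.2 (mn q) haS hc
      omega
    have step1 : cCost x (Finset.Icc s e) ≤ dist (x s) (x e) / 2 := by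
      apply cCost_le ⟨s, hse⟩ (y := ctr x s e)
      intro j hj
      have hj' := Finset.mem_Icc.1 hj
      exact key_half mono hj'.1 hj'.2 hef.2.1
    have step2 : dist (x s) (x e) ≤ dist (x (mn q)) (x (q.max' hqne)) :=
      dist_mono mono has hef.1 heb hbN
    have step3 : dist (x (mn q)) (x (q.max' hqne)) / 2 ≤ cCost x q := le_cCost haq hbq
    have step4 : cCost x q ≤ π₀.sup' hπ₀ne (cCost x) := Finset.le_sup' _ hq
    linarith
end
end

section
/- Let E = {x₁,…,x_N} ⊂ ℝ² with x_i ≺ x_j for all i < j, and let K ≥ 1. For the discrete K-center problem on E (minimize over partitions of E into K subsets the maximum over subsets of the discrete 1-center cost f(P) = min_{y ∈ P} max_{x ∈ P} ‖x − y‖), there exists an optimal partition in which every cluster is an interval of consecutive indices C_{i,i'} = {x_j : i ≤ j ≤ i'}. -/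
noncomputable section

/-- Discrete 1-center cost of a cluster of indices (0 for the empty cluster). -/
def dCost (x : ℕ → Pt) (P : Finset ℕ) : ℝ :=
  if h : P.Nonempty then
    P.inf' h (fun c => P.sup' h (fun j => dist (x j) (x c))) else 0

section helpers

variable (N : ℕ) (x : ℕ → Pt) (mono : ∀ i j : ℕ, i < j → j ≤ N → prec (x i) (x j))

lemma real_dist_mono {a b c : ℝ} (h1 : a ≤ b) (h2 : b ≤ c) : dist a b ≤ dist a c := by
  rw [Real.dist_eq, Real.dist_eq, abs_sub_comm, abs_sub_comm a c,
    abs_of_nonneg (by linarith : (0:ℝ) ≤ b - a), abs_of_nonneg (by linarith : (0:ℝ) ≤ c - a)]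
  linarith

lemma real_dist_mono' {a b c : ℝ} (h1 : b ≤ a) (h2 : c ≤ b) : dist a b ≤ dist a c := by
  rw [Real.dist_eq, Real.dist_eq,
    abs_of_nonneg (by linarith : (0:ℝ) ≤ a - b), abs_of_nonneg (by linarith : (0:ℝ) ≤ a - c)]
  linarith

include mono in
lemma coord_mono (i j : ℕ) (hij : i ≤ j) (hjN : j ≤ N) : x i 0 ≤ x j 0 ∧ x j 1 ≤ x i 1 := by
  rcases eq_or_lt_of_le hij with h | h
  · subst h; exact ⟨le_rfl, le_rfl⟩
  · obtain ⟨h1, h2⟩ := mono i j h hjN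
    exact ⟨h1.le, h2.le⟩

include mono in
-- distance monotonicity on the chain
lemma dist_mono_right (i j k : ℕ) (hij : i ≤ j) (hjk : j ≤ k) (hkN : k ≤ N) :
    dist (x i) (x j) ≤ dist (x i) (x k) := by
  obtain ⟨a1, a2⟩ := coord_mono N x mono i j hij (hjk.trans hkN)
  obtain ⟨b1, b2⟩ := coord_mono N x mono j k hjk hkN
  rw [EuclideanSpace.dist_eq, EuclideanSpace.dist_eq]
  apply Real.sqrt_le_sqrt
  rw [Fin.sum_univ_two, Fin.sum_univ_two]
  have e1 : dist (x i 0) (x j 0) ≤ dist (x i 0) (x k 0) := real_dist_mono a1 b1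
  have e2 : dist (x i 1) (x j 1) ≤ dist (x i 1) (x k 1) := real_dist_mono' a2 b2
  have := pow_le_pow_left₀ dist_nonneg e1 2
  have := pow_le_pow_left₀ dist_nonneg e2 2
  linarith

include mono in
lemma dist_mono_left (i j k : ℕ) (hij : i ≤ j) (hjk : j ≤ k) (hkN : k ≤ N) :
    dist (x j) (x k) ≤ dist (x i) (x k) := by
  rw [dist_comm (x j), dist_comm (x i)]
  obtain ⟨a1, a2⟩ := coord_mono N x mono i j hij (hjk.trans hkN)
  obtain ⟨b1, b2⟩ := coord_mono N x mono j k hjk hkN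
  rw [EuclideanSpace.dist_eq, EuclideanSpace.dist_eq]
  apply Real.sqrt_le_sqrt
  rw [Fin.sum_univ_two, Fin.sum_univ_two]
  have e1 : dist (x k 0) (x j 0) ≤ dist (x k 0) (x i 0) := real_dist_mono' b1 a1
  have e2 : dist (x k 1) (x j 1) ≤ dist (x k 1) (x i 1) := real_dist_mono b2 a2
  have := pow_le_pow_left₀ dist_nonneg e1 2
  have := pow_le_pow_left₀ dist_nonneg e2 2
  linarith

lemma dCost_nonneg (P : Finset ℕ) : 0 ≤ dCost x P := by
  unfold dCost
  split_ifs with h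
  · apply Finset.le_inf'
    intro c hc
    exact le_trans dist_nonneg (Finset.le_sup' (fun j => dist (x j) (x c)) hc)
  · exact le_refl 0

-- extract a center witnessing the cost bound
lemma exists_center {P : Finset ℕ} (h : P.Nonempty) {r : ℝ} (hr : dCost x P ≤ r) :
    ∃ c ∈ P, ∀ j ∈ P, dist (x j) (x c) ≤ r := by
  unfold dCost at hr
  rw [dif_pos h] at hr
  obtain ⟨c, hc, hceq⟩ := Finset.exists_mem_eq_inf' h (fun c => P.sup' h (fun j => dist (x j) (x c)))
  refine ⟨c, hc, fun j hj => ?_⟩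
  calc dist (x j) (x c) ≤ P.sup' h (fun j => dist (x j) (x c)) :=
        Finset.le_sup' (fun j => dist (x j) (x c)) hj
    _ ≤ r := by rw [← hceq]; exact hr

-- interval cost bound via clamped center
include mono in
lemma interval_cost_le {a b c : ℕ} {r : ℝ} (hab : a ≤ b) (hbN : b ≤ N) (hcN : c ≤ N)
    (hr : ∀ j ∈ Finset.Icc a b, dist (x j) (x c) ≤ r) :
    dCost x (Finset.Icc a b) ≤ r := by
  have hne : (Finset.Icc a b).Nonempty := Finset.nonempty_Icc.2 hab
  set c' : ℕ := min (max c a) b with hc'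
  have hc'mem : c' ∈ Finset.Icc a b := by
    rw [Finset.mem_Icc]
    constructor
    · exact le_min (le_max_right c a) hab
    · exact min_le_right _ _
  have key : ∀ j ∈ Finset.Icc a b, dist (x j) (x c') ≤ r := by
    intro j hj
    rw [Finset.mem_Icc] at hj
    rcases le_or_gt c j with hcj | hjc
    · -- c ≤ j : show c ≤ c' ≤ j
      have h1 : c ≤ c' := by omega
      have h2 : c' ≤ j := by omega
      calc dist (x j) (x c') = dist (x c') (x j) := dist_comm _ _
        _ ≤ dist (x c) (x j) := dist_mono_left N x mono c c' j h1 h2 (le_trans hj.2 hbN)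
        _ = dist (x j) (x c) := dist_comm _ _
        _ ≤ r := hr j (Finset.mem_Icc.2 hj)
    · -- j < c : j ≤ c' ≤ c
      have h1 : j ≤ c' := by omega
      have h2 : c' ≤ c := by omega
      calc dist (x j) (x c') ≤ dist (x j) (x c) := dist_mono_right N x mono j c' c h1 h2 hcN
        _ ≤ r := hr j (Finset.mem_Icc.2 hj)
  unfold dCost
  rw [dif_pos hne]
  calc (Finset.Icc a b).inf' hne (fun c => (Finset.Icc a b).sup' hne (fun j => dist (x j) (x c)))
      ≤ (Finset.Icc a b).sup' hne (fun j => dist (x j) (x c')) := Finset.inf'_le _ hc'mem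
    _ ≤ r := Finset.sup'_le _ _ key

-- splitting lemma
include mono in
lemma split_lemma {r : ℝ} (hr0 : 0 ≤ r) :
    ∀ d k (π : Finset (Finset ℕ)), IsPartitionOf π (Finset.Icc 1 N) k →
      (∀ p ∈ π, (∃ i i', p = Finset.Icc i i') ∧ dCost x p ≤ r) → k + d ≤ N →
      ∃ π', IsPartitionOf π' (Finset.Icc 1 N) (k + d) ∧
        (∀ p ∈ π', (∃ i i', p = Finset.Icc i i') ∧ dCost x p ≤ r) := by
  intro d
  induction d with
  | zero => intro k π hpart hprop _; exact ⟨π, hpart, hprop⟩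
  | succ d ih =>
    intro k π hpart hprop hkd
    obtain ⟨hne, hdisj, hsup, hcard⟩ := hpart
    -- there is a part with at least two elements
    have hNcard : (Finset.Icc 1 N).card = N := by rw [Nat.card_Icc]; omega
    have hbig : ∃ p ∈ π, 2 ≤ p.card := by
      by_contra hc
      push_neg at hc
      have hone : ∀ p ∈ π, p.card = 1 := by
        intro p hp
        have := hc p hp
        have := Finset.card_pos.2 (hne p hp)
        omega
      have h1 : (Finset.Icc 1 N).card ≤ ∑ p ∈ π, p.card := by
        rw [← hsup, Finset.sup_eq_biUnion]
        exact Finset.card_biUnion_le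
      rw [hNcard, Finset.sum_congr rfl hone, Finset.sum_const, smul_eq_mul, mul_one, hcard] at h1
      omega
    obtain ⟨p, hp, hp2⟩ := hbig
    obtain ⟨⟨a, b, hab⟩, hcost⟩ := hprop p hp
    subst hab
    rw [Nat.card_Icc] at hp2
    have hab : a < b := by omega
    have hsub : Finset.Icc a b ⊆ Finset.Icc 1 N := by
      rw [← hsup]
      exact Finset.le_sup (f := id) hp
    have ha1 : 1 ≤ a := by
      have := hsub (Finset.mem_Icc.2 ⟨le_refl a, hab.le⟩)
      rw [Finset.mem_Icc] at this; omega
    have hbN : b ≤ N := by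
      have := hsub (Finset.mem_Icc.2 ⟨hab.le, le_refl b⟩)
      rw [Finset.mem_Icc] at this; omega
    -- a center for p
    obtain ⟨c, hcmem, hcr⟩ := exists_center x (Finset.nonempty_Icc.2 hab.le) hcost
    have hcN : c ≤ N := by
      have := hsub hcmem; rw [Finset.mem_Icc] at this; omega
    -- the two new parts
    have hq1q2 : Finset.Icc a a ≠ Finset.Icc (a+1) b := by
      intro h
      have : a ∈ Finset.Icc (a+1) b := h ▸ Finset.mem_Icc.2 ⟨le_refl a, le_refl a⟩
      rw [Finset.mem_Icc] at this; omega
    have hq1p : Finset.Icc a a ⊆ Finset.Icc a b := Finset.Icc_subset_Icc le_rfl hab.le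
    have hq2p : Finset.Icc (a+1) b ⊆ Finset.Icc a b := Finset.Icc_subset_Icc (by omega) le_rfl
    have hq1ne : (Finset.Icc a a).Nonempty := Finset.nonempty_Icc.2 le_rfl
    have hq2ne : (Finset.Icc (a+1) b).Nonempty := Finset.nonempty_Icc.2 (by omega)
    have hnotin : ∀ q : Finset ℕ, q.Nonempty → q ⊆ Finset.Icc a b → q ∉ π.erase (Finset.Icc a b) := by
      intro q hqne hqsub hqin
      have hqπ := Finset.mem_of_mem_erase hqin
      have hqne' := Finset.ne_of_mem_erase hqin
      have hdis := hdisj hqπ hp hqne'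
      obtain ⟨j, hj⟩ := hqne
      exact (Finset.disjoint_left.1 hdis) hj (hqsub hj) 
    have hx2 : Finset.Icc (a+1) b ∉ π.erase (Finset.Icc a b) := hnotin _ hq2ne hq2p
    have hx1 : Finset.Icc a a ∉ insert (Finset.Icc (a+1) b) (π.erase (Finset.Icc a b)) := by
      intro h
      rcases Finset.mem_insert.1 h with h | h
      · exact hq1q2 h
      · exact hnotin _ hq1ne hq1p h
    set π' : Finset (Finset ℕ) :=
      insert (Finset.Icc a a) (insert (Finset.Icc (a+1) b) (π.erase (Finset.Icc a b))) with hπ'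
    have hunion : Finset.Icc a a ⊔ Finset.Icc (a+1) b = Finset.Icc a b := by
      ext j
      simp only [Finset.sup_eq_union, Finset.mem_union, Finset.mem_Icc]
      omega
    have hins : insert (Finset.Icc a b) (π.erase (Finset.Icc a b)) = π := Finset.insert_erase hp
    -- π' is a partition into k+1 parts
    have hpart' : IsPartitionOf π' (Finset.Icc 1 N) (k + 1) := by
      refine ⟨?_, ?_, ?_, ?_⟩
      · intro q hq
        rcases Finset.mem_insert.1 hq with h | h
        · exact h ▸ hq1ne
        rcases Finset.mem_insert.1 h with h | h
        · exact h ▸ hq2ne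
        · exact hne q (Finset.mem_of_mem_erase h)
      · rw [hπ', Finset.coe_insert, Finset.coe_insert]
        have hbase : (↑(π.erase (Finset.Icc a b)) : Set (Finset ℕ)).PairwiseDisjoint id := by
          apply hdisj.subset
          rw [Finset.coe_erase]
          exact Set.diff_subset
        have hdisq : ∀ q ∈ π.erase (Finset.Icc a b), Disjoint (Finset.Icc a b) q := by
          intro q hq
          exact hdisj hp (Finset.mem_of_mem_erase hq) (Ne.symm (Finset.ne_of_mem_erase hq))
        have hstep : (insert (Finset.Icc (a+1) b) (↑(π.erase (Finset.Icc a b)) : Set (Finset ℕ))).PairwiseDisjoint id := by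
          apply hbase.insert
          intro q hq _
          exact Finset.disjoint_of_subset_left hq2p (hdisq q hq)
        apply hstep.insert
        intro q hq _
        rcases hq with h | h
        · subst h
          rw [Finset.disjoint_left]
          intro j hj1 hj2
          simp only [id_eq, Finset.mem_Icc] at hj1 hj2
          omega
        · exact Finset.disjoint_of_subset_left hq1p (hdisq q h)
      · rw [hπ', Finset.sup_insert, Finset.sup_insert, ← sup_assoc]
        show (Finset.Icc a a ⊔ Finset.Icc (a+1) b) ⊔ (π.erase (Finset.Icc a b)).sup id = _
        rw [hunion]
        conv_rhs => rw [← hsup, ← hins, Finset.sup_insert, id_eq]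
      · rw [hπ', Finset.card_insert_of_notMem hx1, Finset.card_insert_of_notMem hx2,
          Finset.card_erase_of_mem hp, hcard]
        have : 1 ≤ k := by
          have := Finset.card_pos.2 ⟨_, hp⟩
          omega
        omega
    have hprop' : ∀ q ∈ π', (∃ i i', q = Finset.Icc i i') ∧ dCost x q ≤ r := by
      intro q hq
      rcases Finset.mem_insert.1 hq with h | h
      · subst h
        refine ⟨⟨a, a, rfl⟩, ?_⟩
        have : dCost x (Finset.Icc a a) = 0 := by
          simp [dCost]
        rw [this]; exact hr0
      rcases Finset.mem_insert.1 h with h | h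
      · subst h
        refine ⟨⟨a+1, b, rfl⟩, ?_⟩
        exact interval_cost_le N x mono (by omega) hbN hcN
          (fun j hj => hcr j (hq2p hj))
      · exact hprop q (Finset.mem_of_mem_erase h)
    obtain ⟨π'', h1, h2⟩ := ih (k+1) π' hpart' hprop' (by omega)
    have : k + 1 + d = k + (d + 1) := by omega
    rw [this] at h1
    exact ⟨π'', h1, h2⟩

-- main construction: from any K-partition get an interval K-partition no worse
include mono in
lemma intervalize {K : ℕ} (hK : 1 ≤ K) (hKN : K ≤ N) (π' : Finset (Finset ℕ))
    (hπ' : IsPartitionOf π' (Finset.Icc 1 N) K) :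
    ∃ π'', IsPartitionOf π'' (Finset.Icc 1 N) K ∧
      (∀ p ∈ π'', ∃ i i', p = Finset.Icc i i') ∧
      kObj (dCost x) π'' ≤ kObj (dCost x) π' := by
  classical
  obtain ⟨hne, hdisj, hsup, hcard⟩ := hπ'
  have hπne : π'.Nonempty := Finset.card_pos.1 (by omega)
  set r := kObj (dCost x) π' with hr
  have hrsup : r = π'.sup' hπne (dCost x) := by rw [hr, kObj, dif_pos hπne]
  have hcost : ∀ p ∈ π', dCost x p ≤ r := by
    intro p hp
    rw [hrsup]
    exact Finset.le_sup' (dCost x) hp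
  have hr0 : 0 ≤ r := by
    obtain ⟨p, hp⟩ := hπne
    exact le_trans (dCost_nonneg x p) (hcost p hp)
  have hcent : ∀ p ∈ π', ∃ c ∈ p, ∀ j ∈ p, dist (x j) (x c) ≤ r :=
    fun p hp => exists_center x (hne p hp) (hcost p hp)
  choose! f hf1 hf2 using hcent
  set C := π'.image f with hC
  have hCsub : C ⊆ Finset.Icc 1 N := by
    intro c hc
    rw [hC, Finset.mem_image] at hc
    obtain ⟨p, hp, hpc⟩ := hc
    rw [← hsup]
    exact (Finset.le_sup (f := id) hp) (hpc ▸ hf1 p hp)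
  have hCcard : C.card ≤ K := le_trans Finset.card_image_le (le_of_eq hcard)
  have hcover : ∀ j ∈ Finset.Icc 1 N, ∃ c ∈ C, dist (x j) (x c) ≤ r := by
    intro j hj
    rw [← hsup, Finset.mem_sup] at hj
    obtain ⟨p, hp, hjp⟩ := hj
    exact ⟨f p, Finset.mem_image_of_mem f hp, hf2 p hp j hjp⟩
  set F : ℕ → Finset ℕ := fun j => C.filter (fun c => dist (x j) (x c) ≤ r) with hF
  have hFne : ∀ j ∈ Finset.Icc 1 N, (F j).Nonempty := by
    intro j hj
    obtain ⟨c, hc1, hc2⟩ := hcover j hj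
    exact ⟨c, Finset.mem_filter.2 ⟨hc1, hc2⟩⟩
  set m : ℕ → ℕ := fun j => if h : (F j).Nonempty then (F j).min' h else 0 with hm
  have hmF : ∀ j ∈ Finset.Icc 1 N, m j ∈ F j := by
    intro j hj
    simp only [hm, dif_pos (hFne j hj)]
    exact Finset.min'_mem _ _
  have hmC : ∀ j ∈ Finset.Icc 1 N, m j ∈ C := fun j hj => Finset.mem_of_mem_filter _ (hmF j hj)
  have hmr : ∀ j ∈ Finset.Icc 1 N, dist (x j) (x (m j)) ≤ r :=
    fun j hj => (Finset.mem_filter.1 (hmF j hj)).2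
  have hmle : ∀ j ∈ Finset.Icc 1 N, ∀ c ∈ F j, m j ≤ c := by
    intro j hj c hc
    simp only [hm, dif_pos (hFne j hj)]
    exact Finset.min'_le _ _ hc
  have hmN : ∀ j ∈ Finset.Icc 1 N, m j ≤ N := by
    intro j hj
    have := hCsub (hmC j hj)
    rw [Finset.mem_Icc] at this; omega
  have hjN : ∀ j ∈ Finset.Icc 1 N, j ≤ N := by
    intro j hj; rw [Finset.mem_Icc] at hj; omega
  -- m is monotone on Icc 1 N
  have hmono : ∀ j j', j ∈ Finset.Icc 1 N → j' ∈ Finset.Icc 1 N → j ≤ j' → m j ≤ m j' := by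
    intro j j' hj hj' hjj'
    by_contra hcon
    push_neg at hcon
    have hd : dist (x j) (x (m j')) ≤ r := by
      rcases le_or_gt (m j') j with hcj | hjc
      · calc dist (x j) (x (m j')) = dist (x (m j')) (x j) := dist_comm _ _
          _ ≤ dist (x (m j')) (x j') := dist_mono_right N x mono (m j') j j' hcj hjj' (hjN j' hj')
          _ = dist (x j') (x (m j')) := dist_comm _ _
          _ ≤ r := hmr j' hj'
      · calc dist (x j) (x (m j')) ≤ dist (x j) (x (m j)) :=
            dist_mono_right N x mono j (m j') (m j) hjc.le hcon.le (hmN j hj)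
          _ ≤ r := hmr j hj
    have : m j ≤ m j' := hmle j hj (m j') (Finset.mem_filter.2 ⟨hmC j' hj', hd⟩)
    omega
  -- fibers of m form an interval partition into C.card many parts
  set V := (Finset.Icc 1 N).image m with hV
  set fib : ℕ → Finset ℕ := fun v => (Finset.Icc 1 N).filter (fun j => m j = v) with hfib
  set π₀ := V.image fib with hπ₀
  have hfibne : ∀ v ∈ V, (fib v).Nonempty := by
    intro v hv
    rw [hV, Finset.mem_image] at hv
    obtain ⟨j, hj, hjv⟩ := hv
    exact ⟨j, Finset.mem_filter.2 ⟨hj, hjv⟩⟩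
  have hmem_fib : ∀ v j, j ∈ fib v ↔ j ∈ Finset.Icc 1 N ∧ m j = v := by
    intro v j; rw [hfib]; exact Finset.mem_filter
  have hinj : Set.InjOn fib ↑V := by
    intro v hv v' hv' hvv'
    obtain ⟨j, hj⟩ := hfibne v hv
    have hj' : j ∈ fib v' := hvv' ▸ hj
    rw [hmem_fib] at hj hj'
    omega
  have hVsub : V ⊆ C := by
    intro v hv
    rw [hV, Finset.mem_image] at hv
    obtain ⟨j, hj, hjv⟩ := hv
    exact hjv ▸ hmC j hj
  have hVcard : V.card ≤ K := le_trans (Finset.card_le_card hVsub) hCcard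
  have hVne : V.Nonempty := by
    refine Finset.Nonempty.image ?_ m
    exact Finset.nonempty_Icc.2 (le_trans hK hKN)
  have hpart0 : IsPartitionOf π₀ (Finset.Icc 1 N) V.card := by
    refine ⟨?_, ?_, ?_, ?_⟩
    · intro p hp
      rw [hπ₀, Finset.mem_image] at hp
      obtain ⟨v, hv, hvp⟩ := hp
      exact hvp ▸ hfibne v hv
    · intro p hp q hq hpq
      rw [hπ₀, Finset.coe_image, Set.mem_image] at hp hq
      obtain ⟨v, hv, hvp⟩ := hp
      obtain ⟨v', hv', hvq⟩ := hq
      have hvv' : v ≠ v' := by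
        intro h; exact hpq (by rw [← hvp, ← hvq, h])
      simp only [Function.onFun, id_eq]
      rw [Finset.disjoint_left]
      intro j hj1 hj2
      rw [← hvp, hmem_fib] at hj1
      rw [← hvq, hmem_fib] at hj2
      omega
    · apply le_antisymm
      · apply Finset.sup_le
        intro p hp
        rw [hπ₀, Finset.mem_image] at hp
        obtain ⟨v, _, hvp⟩ := hp
        rw [id_eq, ← hvp, hfib]
        exact Finset.filter_subset _ _
      · intro j hj
        have h1 : fib (m j) ∈ π₀ := by
          rw [hπ₀]
          exact Finset.mem_image_of_mem fib (Finset.mem_image_of_mem m hj)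
        exact (Finset.le_sup (f := id) h1) ((hmem_fib (m j) j).2 ⟨hj, rfl⟩)
    · rw [hπ₀, Finset.card_image_of_injOn hinj]
  have hprop0 : ∀ p ∈ π₀, (∃ i i', p = Finset.Icc i i') ∧ dCost x p ≤ r := by
    intro p hp
    rw [hπ₀, Finset.mem_image] at hp
    obtain ⟨v, hv, hvp⟩ := hp
    have hpne : (fib v).Nonempty := hfibne v hv
    set a := (fib v).min' hpne with ha
    set b := (fib v).max' hpne with hb
    have hamem : a ∈ fib v := Finset.min'_mem (fib v) hpne
    have hbmem : b ∈ fib v := Finset.max'_mem (fib v) hpne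
    rw [hmem_fib] at hamem hbmem
    have haIcc : a ∈ Finset.Icc 1 N := hamem.1
    have hbIcc : b ∈ Finset.Icc 1 N := hbmem.1
    have hfibIcc : fib v = Finset.Icc a b := by
      ext j
      constructor
      · intro hj
        rw [Finset.mem_Icc]
        exact ⟨Finset.min'_le _ _ hj, Finset.le_max' _ _ hj⟩
      · intro hj
        rw [Finset.mem_Icc] at hj
        have hjIcc : j ∈ Finset.Icc 1 N := by
          rw [Finset.mem_Icc] at haIcc hbIcc ⊢
          omega
        have h1 : m a ≤ m j := hmono a j haIcc hjIcc hj.1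
        have h2 : m j ≤ m b := hmono j b hjIcc hbIcc hj.2
        rw [hmem_fib]
        have e1 := hamem.2
        have e2 := hbmem.2
        refine ⟨hjIcc, by omega⟩
    have hab : a ≤ b := Finset.min'_le _ b (Finset.max'_mem (fib v) hpne)
    have hbN : b ≤ N := hjN b hbIcc
    have hvN : v ≤ N := by
      have := hCsub (hVsub hv)
      rw [Finset.mem_Icc] at this; omega
    have hrr : ∀ j ∈ Finset.Icc a b, dist (x j) (x v) ≤ r := by
      intro j hj
      rw [← hfibIcc, hmem_fib] at hj
      have := hmr j hj.1
      rwa [hj.2] at this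
    refine ⟨⟨a, b, by rw [← hvp, hfibIcc]⟩, ?_⟩
    rw [← hvp, hfibIcc]
    exact interval_cost_le N x mono hab hbN hvN hrr
  -- split into exactly K parts
  obtain ⟨π'', hpart'', hprop''⟩ := split_lemma N x mono hr0 (K - V.card) V.card π₀
    hpart0 hprop0 (by omega)
  have hKeq : V.card + (K - V.card) = K := by omega
  rw [hKeq] at hpart''
  refine ⟨π'', hpart'', fun p hp => (hprop'' p hp).1, ?_⟩
  have hπ''ne : π''.Nonempty := Finset.card_pos.1 (by rw [hpart''.2.2.2]; omega)
  rw [kObj, dif_pos hπ''ne]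
  exact Finset.sup'_le _ _ (fun p hp => (hprop'' p hp).2)

end helpers

/-- For the discrete K-center problem on a 2d Pareto front `x₁,…,x_N`,
there exists an optimal partition all of whose clusters are intervals of
consecutive indices. -/
theorem discrete_kcenter_interval_optimal (N K : ℕ) (hK : 1 ≤ K) (hKN : K ≤ N)
    (x : ℕ → Pt) (mono : ∀ i j : ℕ, i < j → j ≤ N → prec (x i) (x j)) :
    ∃ π : Finset (Finset ℕ), IsPartitionOf π (Finset.Icc 1 N) K ∧
      (∀ p ∈ π, ∃ i i' : ℕ, p = Finset.Icc i i') ∧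
      (∀ π' : Finset (Finset ℕ), IsPartitionOf π' (Finset.Icc 1 N) K →
        kObj (dCost x) π ≤ kObj (dCost x) π') := by
  classical
  -- the finite set of interval K-partitions
  set T : Finset (Finset (Finset ℕ)) :=
    ((Finset.Icc 1 N).powerset.powerset).filter
      (fun π => IsPartitionOf π (Finset.Icc 1 N) K ∧ ∀ p ∈ π, ∃ i i', p = Finset.Icc i i')
    with hT
  have hmemT : ∀ π : Finset (Finset ℕ),
      (IsPartitionOf π (Finset.Icc 1 N) K ∧ ∀ p ∈ π, ∃ i i', p = Finset.Icc i i') → π ∈ T := by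
    intro π h
    rw [hT, Finset.mem_filter]
    refine ⟨?_, h⟩
    rw [Finset.mem_powerset]
    intro p hp
    rw [Finset.mem_powerset]
    have := h.1.2.2.1
    calc p ≤ π.sup id := Finset.le_sup (f := id) hp
    _ = Finset.Icc 1 N := this
  -- T is nonempty: start from the trivial partition and split
  have hTne : T.Nonempty := by
    have h1 : IsPartitionOf ({Finset.Icc 1 N} : Finset (Finset ℕ)) (Finset.Icc 1 N) 1 := by
      refine ⟨?_, ?_, ?_, ?_⟩
      · intro p hp
        simp only [Finset.mem_singleton] at hp
        subst hp
        exact Finset.nonempty_Icc.2 (le_trans hK hKN)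
      · simp [Set.PairwiseDisjoint]
      · simp
      · simp
    obtain ⟨π', hπ', hint⟩ := split_lemma N x mono (dCost_nonneg x (Finset.Icc 1 N))
      (K - 1) 1 ({Finset.Icc 1 N} : Finset (Finset ℕ)) h1
      (by intro p hp; simp only [Finset.mem_singleton] at hp; subst hp
          exact ⟨⟨1, N, rfl⟩, le_refl _⟩)
      (by omega)
    have : 1 + (K - 1) = K := by omega
    rw [this] at hπ'
    exact ⟨π', hmemT π' ⟨hπ', fun p hp => (hint p hp).1⟩⟩
  obtain ⟨π, hπT, hπmin⟩ := T.exists_min_image (kObj (dCost x)) hTne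
  rw [hT, Finset.mem_filter] at hπT
  refine ⟨π, hπT.2.1, hπT.2.2, ?_⟩
  intro π' hπ'
  obtain ⟨π'', hπ'', hint, hle⟩ := intervalize N x mono hK hKN π' hπ'
  exact le_trans (hπmin π'' (hmemT π'' ⟨hπ'', hint⟩)) hle
end
end

section
/- Let x₁,…,x_N ∈ ℝ² with x_i ≺ x_j for all i < j, and fix i < i'. Define f_{i,i'}(j) = max(‖x_j − x_i‖, ‖x_j − x_{i'}‖) for j ∈ [i, i']. Then there exists l ∈ [i, i'] such that f_{i,i'} is strictly decreasing on [i, l], f_{i,i'}(l+1) ≥ f_{i,i'}(l), and f_{i,i'} is strictly increasing on [l+1, i'] (i.e., f_{i,i'} is unimodal). -/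
noncomputable section

lemma dist_formula (y z : Pt) :
    dist y z = Real.sqrt ((y 0 - z 0)^2 + (y 1 - z 1)^2) := by
  rw [EuclideanSpace.dist_eq]
  simp [Fin.sum_univ_two, Real.dist_eq, sq_abs]

lemma key (a b c : Pt) (h1 : prec a b) (h2 : prec b c) : dist b c < dist a c := by
  rw [dist_formula, dist_formula]
  apply Real.sqrt_lt_sqrt (by positivity)
  obtain ⟨p1, q1⟩ := h1
  obtain ⟨p2, q2⟩ := h2
  nlinarith [sq_nonneg (b 0 - c 0), sq_nonneg (b 1 - c 1)]

lemma key2 (a b c : Pt) (h1 : prec a b) (h2 : prec b c) : dist a b < dist a c := by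
  rw [dist_formula, dist_formula]
  apply Real.sqrt_lt_sqrt (by positivity)
  obtain ⟨p1, q1⟩ := h1
  obtain ⟨p2, q2⟩ := h2
  nlinarith

lemma prec_ne (a b : Pt) (h : prec a b) : a ≠ b := by
  intro he; rw [he] at h; exact lt_irrefl _ h.1

/-- Unimodality of `f_{i,i'}(j) = max(‖x_j − x_i‖, ‖x_j − x_{i'}‖)` on a 2d Pareto
front: there is `l ∈ [i, i')` such that `f` is strictly decreasing on `[i, l]`,
`f(l+1) ≥ f(l)`, and `f` is strictly increasing on `[l+1, i']`. -/
theorem discrete_center_cost_unimodal (N : ℕ) (x : ℕ → Pt)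
    (mono : ∀ i j : ℕ, i < j → j ≤ N → prec (x i) (x j))
    (i i' : ℕ) (hii : i < i') (hN : i' ≤ N) :
    ∃ l : ℕ, i ≤ l ∧ l < i' ∧
      (∀ j k : ℕ, i ≤ j → j < k → k ≤ l →
        max (dist (x k) (x i)) (dist (x k) (x i'))
          < max (dist (x j) (x i)) (dist (x j) (x i'))) ∧
      (max (dist (x l) (x i)) (dist (x l) (x i'))
        ≤ max (dist (x (l + 1)) (x i)) (dist (x (l + 1)) (x i'))) ∧
      (∀ j k : ℕ, l + 1 ≤ j → j < k → k ≤ i' →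
        max (dist (x j) (x i)) (dist (x j) (x i'))
          < max (dist (x k) (x i)) (dist (x k) (x i'))) := by
  set g : ℕ → ℝ := fun j => dist (x j) (x i) with hgdef
  set h : ℕ → ℝ := fun j => dist (x j) (x i') with hhdef
  -- g is strictly increasing on [i, N]
  have hg : ∀ j k : ℕ, i ≤ j → j < k → k ≤ N → g j < g k := by
    intro j k hij hjk hkN
    rcases eq_or_lt_of_le hij with he | hij'
    · have h0 : g j = 0 := by simp [hgdef, ← he]
      rw [h0]
      show (0:ℝ) < dist (x k) (x i)
      exact dist_pos.mpr fun h2 => prec_ne _ _ (mono i k (he ▸ hjk) hkN) h2.symm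
    · have h1 : prec (x i) (x j) := mono i j hij' (le_trans (le_of_lt hjk) hkN)
      have h2 : prec (x j) (x k) := mono j k hjk hkN
      simpa [hgdef, dist_comm] using key2 (x i) (x j) (x k) h1 h2
  -- h is strictly decreasing on [·, i']
  have hh : ∀ j k : ℕ, j < k → k ≤ i' → h k < h j := by
    intro j k hjk hki'
    rcases eq_or_lt_of_le hki' with he | hki''
    · have h0 : h k = 0 := by simp [hhdef, he]
      rw [h0]
      show (0:ℝ) < dist (x j) (x i')
      exact dist_pos.mpr (prec_ne _ _ (he ▸ mono j k hjk (le_trans hki' hN)))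
    · have h1 : prec (x j) (x k) := mono j k hjk (le_trans (le_of_lt hki'') hN)
      have h2 : prec (x k) (x i') := mono k i' hki'' hN
      exact key (x j) (x k) (x i') h1 h2
  -- the crossing set
  have hS : (i' - 1) ∈ {l : ℕ | i ≤ l ∧ h l ≤ g (l + 1)} := by
    constructor
    · omega
    · have hl1 : i' - 1 + 1 = i' := by omega
      rw [hl1]
      rcases eq_or_lt_of_le (Nat.le_sub_one_of_lt hii) with he | hlt
      · rw [← he]
        simp [hgdef, hhdef, dist_comm]
      · have h1 : prec (x i) (x (i' - 1)) := mono i (i' - 1) hlt (by omega)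
        have h2 : prec (x (i' - 1)) (x i') := mono (i' - 1) i' (by omega) hN
        have := key (x i) (x (i' - 1)) (x i') h1 h2
        simp only [hgdef, hhdef]
        rw [dist_comm (x i') (x i)]
        exact le_of_lt this
  set S := {l : ℕ | i ≤ l ∧ h l ≤ g (l + 1)} with hSdef
  have hSne : S.Nonempty := ⟨i' - 1, hS⟩
  set l := sInf S with hldef
  have hlS : l ∈ S := Nat.sInf_mem hSne
  have hli : i ≤ l := hlS.1
  have hcross : h l ≤ g (l + 1) := hlS.2
  have hlle : l ≤ i' - 1 := Nat.sInf_le hS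
  have hli' : l < i' := by omega
  have hmin : ∀ m : ℕ, i ≤ m → m < l → g (m + 1) < h m := by
    intro m him hml
    have : m ∉ S := Nat.notMem_of_lt_sInf hml
    simp only [hSdef, Set.mem_setOf_eq, not_and, not_le] at this
    exact this him
  refine ⟨l, hli, hli', ?_, ?_, ?_⟩
  · -- strictly decreasing on [i, l]
    intro j k hij hjk hkl
    apply max_lt
    · -- g k < max (g j) (h j) : via g k < h (k-1) ≤ h j
      have hk1 : k - 1 < l := by omega
      have hk1i : i ≤ k - 1 := by omega
      have h1 : g k < h (k - 1) := by
        have := hmin (k - 1) hk1i hk1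
        rwa [Nat.sub_add_cancel (by omega : 1 ≤ k)] at this
      have h2 : h (k - 1) ≤ h j := by
        rcases eq_or_lt_of_le (by omega : j ≤ k - 1) with he | hlt
        · rw [he]
        · exact le_of_lt (hh j (k - 1) hlt (by omega))
      exact lt_of_lt_of_le (lt_of_lt_of_le h1 h2) (le_max_right _ _)
    · exact lt_of_lt_of_le (hh j k hjk (by omega)) (le_max_right _ _)
  · -- f l ≤ f (l+1)
    apply max_le
    · exact le_trans (le_of_lt (hg l (l + 1) hli (by omega) (by omega))) (le_max_left _ _)
    · exact le_trans hcross (le_max_left _ _)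
  · -- strictly increasing on [l+1, i']
    intro j k hlj hjk hki'
    have hgjk : g j < g k := hg j k (by omega) hjk (by omega)
    have hhj : h j < g k := by
      have h1 : h j ≤ h (l + 1) := by
        rcases eq_or_lt_of_le hlj with he | hlt
        · rw [← he]
        · exact le_of_lt (hh (l + 1) j hlt (by omega))
      have h2 : h (l + 1) < h l := hh l (l + 1) (by omega) (by omega)
      have h3 : g (l + 1) ≤ g j := by
        rcases eq_or_lt_of_le hlj with he | hlt
        · rw [he]
        · exact le_of_lt (hg (l + 1) j (by omega) hlt (by omega))
      calc h j ≤ h (l + 1) := h1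
        _ < h l := h2
        _ ≤ g (l + 1) := hcross
        _ ≤ g j := h3
        _ < g k := hgjk
    calc max (g j) (h j) < g k := max_lt hgjk hhj
      _ ≤ max (g k) (h k) := le_max_left _ _
end
end

section
/- Let x₁,…,x_N ∈ ℝ² with x_i ≺ x_j for all i < j, let f denote the continuous (or discrete) 1-center cost, and C_{j,k} the optimal k-center value on {x₁,…,x_j}. Fix i ∈ [2,N] and k ≥ 2, and define g(j) = max(C_{j−1,k−1}, f({x_j,…,x_i})) for j ∈ [2,i]. Then g is unimodal: there exists l ∈ [2,i] such that g is weakly decreasing on [2,l] and weakly increasing on [l+1,i]. -/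
noncomputable section

/-- Optimal k-center value on the index set `S`: infimum of the objective
over all partitions of `S` into `k` nonempty parts. -/
def CVal (cost : Finset ℕ → ℝ) (S : Finset ℕ) (k : ℕ) : ℝ :=
  sInf (kObj cost '' {π | IsPartitionOf π S k})

namespace DPAux

variable {N : ℕ} {x : ℕ → Pt}

lemma coord0 (mono : ∀ i j : ℕ, i < j → j ≤ N → prec (x i) (x j)) {u v : ℕ}
    (huv : u ≤ v) (hv : v ≤ N) : x u 0 ≤ x v 0 := by
  rcases lt_or_eq_of_le huv with h | h
  · exact (mono u v h hv).1.le
  · rw [h]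

lemma coord1 (mono : ∀ i j : ℕ, i < j → j ≤ N → prec (x i) (x j)) {u v : ℕ}
    (huv : u ≤ v) (hv : v ≤ N) : x v 1 ≤ x u 1 := by
  rcases lt_or_eq_of_le huv with h | h
  · exact (mono u v h hv).2.le
  · rw [h]

lemma dist_widen (mono : ∀ i j : ℕ, i < j → j ≤ N → prec (x i) (x j))
    {a a' b' b : ℕ} (h1 : a ≤ a') (h2 : a' ≤ b') (h3 : b' ≤ b) (hb : b ≤ N) :
    dist (x a') (x b') ≤ dist (x a) (x b) := by
  have c0a : x a 0 ≤ x a' 0 := coord0 mono h1 (by omega)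
  have c0m : x a' 0 ≤ x b' 0 := coord0 mono h2 (by omega)
  have c0b : x b' 0 ≤ x b 0 := coord0 mono h3 hb
  have c1a : x a' 1 ≤ x a 1 := coord1 mono h1 (by omega)
  have c1m : x b' 1 ≤ x a' 1 := coord1 mono h2 (by omega)
  have c1b : x b 1 ≤ x b' 1 := coord1 mono h3 hb
  rw [EuclideanSpace.dist_eq, EuclideanSpace.dist_eq]
  apply Real.sqrt_le_sqrt
  rw [Fin.sum_univ_two, Fin.sum_univ_two]
  have e0 : dist (x a' 0) (x b' 0) ≤ dist (x a 0) (x b 0) := by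
    rw [Real.dist_eq, Real.dist_eq, abs_of_nonpos (by linarith), abs_of_nonpos (by linarith)]
    linarith
  have e1 : dist (x a' 1) (x b' 1) ≤ dist (x a 1) (x b 1) := by
    rw [Real.dist_eq, Real.dist_eq, abs_of_nonneg (by linarith), abs_of_nonneg (by linarith)]
    linarith
  exact add_le_add (pow_le_pow_left₀ dist_nonneg e0 2) (pow_le_pow_left₀ dist_nonneg e1 2)

variable {cost : Finset ℕ → ℝ}

lemma cost_nonneg (hcost : cost = cCost x ∨ cost = dCost x) (P : Finset ℕ) :
    0 ≤ cost P := by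
  rcases hcost with rfl | rfl
  · unfold cCost
    split_ifs with h
    · refine Real.iInf_nonneg fun y => ?_
      obtain ⟨j, hj⟩ := h
      exact le_trans dist_nonneg (Finset.le_sup' (fun j => dist (x j) y) hj)
    · exact le_refl 0
  · unfold dCost
    split_ifs with h
    · refine Finset.le_inf' h _ fun c hc => ?_
      obtain ⟨j, hj⟩ := h
      exact le_trans dist_nonneg (Finset.le_sup' (fun j => dist (x j) (x c)) hj)
    · exact le_refl 0

lemma cost_singleton (hcost : cost = cCost x ∨ cost = dCost x) (a : ℕ) :
    cost {a} = 0 := by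
  rcases hcost with rfl | rfl
  · unfold cCost
    rw [dif_pos (Finset.singleton_nonempty a)]
    simp only [Finset.sup'_singleton]
    refine le_antisymm ?_ (Real.iInf_nonneg fun y => dist_nonneg)
    have := ciInf_le (f := fun y : Pt => dist (x a) y)
      ⟨0, by rintro v ⟨y, rfl⟩; exact dist_nonneg⟩ (x a)
    simpa using this
  · unfold dCost
    rw [dif_pos (Finset.singleton_nonempty a)]
    simp [dist_self]

lemma cost_cut (hcost : cost = cCost x ∨ cost = dCost x)
    (mono : ∀ i j : ℕ, i < j → j ≤ N → prec (x i) (x j))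
    {P Q : Finset ℕ} (hQN : ∀ q ∈ Q, q ≤ N) (hP : P.Nonempty) (hPQ : P ⊆ Q)
    (hconv : ∀ a b c : ℕ, a ∈ P → c ∈ P → b ∈ Q → a ≤ b → b ≤ c → b ∈ P) :
    cost P ≤ cost Q := by
  have hQ : Q.Nonempty := ⟨hP.choose, hPQ hP.choose_spec⟩
  rcases hcost with rfl | rfl
  · unfold cCost
    rw [dif_pos hP, dif_pos hQ]
    apply ciInf_mono
    · refine ⟨0, ?_⟩
      rintro v ⟨y, rfl⟩
      obtain ⟨j, hj⟩ := hP
      exact le_trans dist_nonneg (Finset.le_sup' (fun j => dist (x j) y) hj)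
    · intro y
      exact Finset.sup'_le hP _ fun j hj => Finset.le_sup' (fun j => dist (x j) y) (hPQ hj)
  · unfold dCost
    rw [dif_pos hP, dif_pos hQ]
    apply Finset.le_inf' hQ
    intro c hc
    by_cases hcP : c ∈ P
    · refine le_trans (Finset.inf'_le _ hcP) ?_
      exact Finset.sup'_le hP _ fun j hj => Finset.le_sup' (fun j => dist (x j) (x c)) (hPQ hj)
    · have hlo := P.min'_mem hP
      have hhi := P.max'_mem hP
      have hcase : c < P.min' hP ∨ P.max' hP < c := by
        by_contra h
        push_neg at h
        exact hcP (hconv _ _ _ hlo hhi hc h.1 h.2)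
      rcases hcase with hcase | hcase
      · refine le_trans (Finset.inf'_le _ hlo) (Finset.sup'_le hP _ fun j hj => ?_)
        have h1 : dist (x j) (x (P.min' hP)) ≤ dist (x j) (x c) := by
          rw [dist_comm (x j), dist_comm (x j)]
          exact dist_widen mono hcase.le (P.min'_le j hj) le_rfl (hQN j (hPQ hj))
        exact le_trans h1 (Finset.le_sup' (fun j => dist (x j) (x c)) (hPQ hj))
      · refine le_trans (Finset.inf'_le _ hhi) (Finset.sup'_le hP _ fun j hj => ?_)
        have h1 : dist (x j) (x (P.max' hP)) ≤ dist (x j) (x c) := by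
          exact dist_widen mono le_rfl (P.le_max' j hj) hcase.le (hQN c hc)
        exact le_trans h1 (Finset.le_sup' (fun j => dist (x j) (x c)) (hPQ hj))

lemma kObj_nonneg (hcost : cost = cCost x ∨ cost = dCost x) (π : Finset (Finset ℕ)) :
    0 ≤ kObj cost π := by
  unfold kObj
  split_ifs with h
  · obtain ⟨p, hp⟩ := h
    exact le_trans (cost_nonneg hcost p) (Finset.le_sup' _ hp)
  · exact le_refl 0

lemma kObj_le (hM : (0:ℝ) ≤ M) {π : Finset (Finset ℕ)} (h : ∀ p ∈ π, cost p ≤ M) :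
    kObj cost π ≤ M := by
  unfold kObj
  split_ifs with hne
  · exact Finset.sup'_le hne _ h
  · exact hM

lemma partition_card_le {π : Finset (Finset ℕ)} {S : Finset ℕ} {K : ℕ}
    (h : IsPartitionOf π S K) : K ≤ S.card := by
  obtain ⟨hne, hdisj, hsup, hcard⟩ := h
  have hbu : S.card = ∑ p ∈ π, p.card := by
    rw [← hsup, Finset.sup_eq_biUnion]
    exact Finset.card_biUnion fun p hp q hq hpq => hdisj hp hq hpq
  have : π.card ≤ ∑ p ∈ π, p.card := by
    rw [Finset.card_eq_sum_ones]
    exact Finset.sum_le_sum fun p hp => (hne p hp).card_pos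
  omega


lemma refine (hcost : cost = cCost x ∨ cost = dCost x)
    (mono : ∀ i j : ℕ, i < j → j ≤ N → prec (x i) (x j))
    {S : Finset ℕ} (hS : ∀ s ∈ S, s ≤ N) {M : ℝ} (hM0 : 0 ≤ M) (n : ℕ) :
    ∀ (t : ℕ) (π : Finset (Finset ℕ)), IsPartitionOf π S t →
      (∀ p ∈ π, cost p ≤ M) → t + n ≤ S.card →
      ∃ π', IsPartitionOf π' S (t + n) ∧ ∀ p ∈ π', cost p ≤ M := by
  induction n with
  | zero => intro t π h hb _; exact ⟨π, h, hb⟩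
  | succ n ih =>
    intro t π h hb hcard
    obtain ⟨hne, hdisj, hsup, hc⟩ := h
    have hsum : S.card = ∑ p ∈ π, p.card := by
      rw [← hsup, Finset.sup_eq_biUnion]
      exact Finset.card_biUnion fun p hp q hq hpq => hdisj hp hq hpq
    have hbig : ∃ p ∈ π, 2 ≤ p.card := by
      by_contra hno
      push_neg at hno
      have h1 : ∑ p ∈ π, p.card ≤ ∑ p ∈ π, 1 :=
        Finset.sum_le_sum fun p hp => by have := hno p hp; omega
      rw [Finset.sum_const, smul_eq_mul, mul_one] at h1
      omega
    obtain ⟨p, hpπ, hp2⟩ := hbig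
    have hpne : p.Nonempty := hne p hpπ
    set a := p.max' hpne with ha
    have hamem : a ∈ p := p.max'_mem hpne
    have hev : (p.erase a).Nonempty := by
      rw [← Finset.card_pos, Finset.card_erase_of_mem hamem]; omega
    have hpS : p ⊆ S := by
      rw [← hsup]; exact Finset.le_sup (f := id) hpπ
    have hane : ({a} : Finset ℕ) ≠ p.erase a := by
      intro hEq
      have : a ∈ p.erase a := hEq ▸ Finset.mem_singleton_self a
      simp at this
    have hsa_not : ({a} : Finset ℕ) ∉ π.erase p := by
      intro hmem
      have hq := Finset.mem_of_mem_erase hmem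
      have hne' := Finset.ne_of_mem_erase hmem
      have hdis : Disjoint (id ({a} : Finset ℕ)) (id p) := hdisj hq hpπ hne'
      simp only [id] at hdis
      exact Finset.disjoint_left.1 hdis (Finset.mem_singleton_self a) hamem
    have her_not : p.erase a ∉ π.erase p := by
      intro hmem
      have hq := Finset.mem_of_mem_erase hmem
      have hne' := Finset.ne_of_mem_erase hmem
      have hdis : Disjoint (id (p.erase a)) (id p) := hdisj hq hpπ hne'
      simp only [id] at hdis
      obtain ⟨b, hb'⟩ := hev
      exact Finset.disjoint_left.1 hdis hb' (Finset.mem_of_mem_erase hb')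
    set π₁ : Finset (Finset ℕ) := insert {a} (insert (p.erase a) (π.erase p)) with hπ₁
    have hsanotin : ({a} : Finset ℕ) ∉ insert (p.erase a) (π.erase p) := by
      rw [Finset.mem_insert]
      push_neg
      exact ⟨hane, hsa_not⟩
    have hpart : IsPartitionOf π₁ S (t + 1) := by
      refine ⟨?_, ?_, ?_, ?_⟩
      · intro q hq
        rw [hπ₁, Finset.mem_insert, Finset.mem_insert] at hq
        rcases hq with rfl | rfl | hq
        · exact Finset.singleton_nonempty a
        · exact hev
        · exact hne q (Finset.mem_of_mem_erase hq)
      · rw [hπ₁, Finset.coe_insert, Finset.coe_insert]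
        apply Set.PairwiseDisjoint.insert
        · apply Set.PairwiseDisjoint.insert
          · exact hdisj.subset fun q hq =>
              Finset.mem_coe.2 (Finset.mem_of_mem_erase (Finset.mem_coe.1 hq))
          · intro q hq hq'
            have hqπ := Finset.mem_of_mem_erase (Finset.mem_coe.1 hq)
            have hdis : Disjoint (id p) (id q) :=
              hdisj hpπ hqπ (Finset.ne_of_mem_erase (Finset.mem_coe.1 hq)).symm
            simp only [id] at hdis ⊢
            exact hdis.mono_left (Finset.erase_subset a p)
        · intro q hq hq'
          rcases hq with rfl | hq
          · simp only [id]
            rw [Finset.disjoint_singleton_left]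
            simp
          · have hqπ := Finset.mem_of_mem_erase (Finset.mem_coe.1 hq)
            have hdis : Disjoint (id p) (id q) :=
              hdisj hpπ hqπ (Finset.ne_of_mem_erase (Finset.mem_coe.1 hq)).symm
            simp only [id] at hdis ⊢
            rw [Finset.disjoint_singleton_left]
            exact Finset.disjoint_left.1 hdis hamem
      · rw [hπ₁, Finset.sup_insert, Finset.sup_insert]
        conv_rhs => rw [← hsup, ← Finset.insert_erase hpπ]
        rw [Finset.sup_insert, ← sup_assoc]
        congr 1
        simp only [id_eq]
        ext b
        simp only [Finset.sup_eq_union, Finset.mem_union, Finset.mem_singleton, Finset.mem_erase]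
        constructor
        · rintro (rfl | ⟨_, hb'⟩)
          · exact hamem
          · exact hb'
        · intro hb'
          by_cases hba : b = a
          · exact Or.inl hba
          · exact Or.inr ⟨hba, hb'⟩
      · rw [hπ₁, Finset.card_insert_of_notMem hsanotin,
          Finset.card_insert_of_notMem her_not, Finset.card_erase_of_mem hpπ]
        have : 0 < π.card := Finset.card_pos.2 ⟨p, hpπ⟩
        omega
    have hb1 : ∀ q ∈ π₁, cost q ≤ M := by
      intro q hq
      rw [hπ₁, Finset.mem_insert, Finset.mem_insert] at hq
      rcases hq with rfl | rfl | hq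
      · rw [cost_singleton hcost]; exact hM0
      · refine le_trans (cost_cut hcost mono (fun q hq => hS q (hpS hq))
          hev (Finset.erase_subset a p) ?_) (hb p hpπ)
        intro u v w hu hw hv huv hvw
        refine Finset.mem_erase.2 ⟨?_, hv⟩
        have hwa : w ≠ a := (Finset.mem_erase.1 hw).1
        have : w ≤ a := p.le_max' w (Finset.mem_of_mem_erase hw)
        omega
      · exact hb q (Finset.mem_of_mem_erase hq)
    obtain ⟨π', h1, h2⟩ := ih (t + 1) π₁ hpart hb1 (by omega)
    exact ⟨π', by rwa [show t + 1 + n = t + (n + 1) by omega] at h1, h2⟩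


lemma CVal_bddBelow (hcost : cost = cCost x ∨ cost = dCost x) (S : Finset ℕ) (K : ℕ) :
    BddBelow (kObj cost '' {π | IsPartitionOf π S K}) := by
  refine ⟨0, ?_⟩
  rintro v ⟨π, _, rfl⟩
  exact kObj_nonneg hcost π

lemma CVal_le_kObj (hcost : cost = cCost x ∨ cost = dCost x)
    {π : Finset (Finset ℕ)} {S : Finset ℕ} {K : ℕ} (h : IsPartitionOf π S K) :
    CVal cost S K ≤ kObj cost π :=
  csInf_le (CVal_bddBelow hcost S K) ⟨π, h, rfl⟩

lemma CVal_nonneg (hcost : cost = cCost x ∨ cost = dCost x) (S : Finset ℕ) (K : ℕ) :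
    0 ≤ CVal cost S K := by
  refine Real.sInf_nonneg ?_
  rintro v ⟨π, _, rfl⟩
  exact kObj_nonneg hcost π

lemma CVal_mono (hcost : cost = cCost x ∨ cost = dCost x)
    (mono : ∀ i j : ℕ, i < j → j ≤ N → prec (x i) (x j))
    {m m' K : ℕ} (hmm : m ≤ m') (hm'N : m' ≤ N) (hK : 1 ≤ K) :
    CVal cost (Finset.Icc 1 m) K ≤ CVal cost (Finset.Icc 1 m') K := by
  by_cases hKm : K ≤ m
  case neg =>
    have hempty : kObj cost '' {π | IsPartitionOf π (Finset.Icc 1 m) K} = ∅ := by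
      rw [Set.image_eq_empty]
      ext π
      simp only [Set.mem_setOf_eq, Set.mem_empty_iff_false, iff_false]
      intro hp
      have := partition_card_le hp
      rw [Nat.card_Icc] at this
      omega
    rw [CVal, hempty, Real.sInf_empty]
    exact CVal_nonneg hcost _ _
  case pos =>
    have hScard : (Finset.Icc 1 m).card = m := by rw [Nat.card_Icc]; omega
    have hS'card : (Finset.Icc 1 m').card = m' := by rw [Nat.card_Icc]; omega
    have hS'N : ∀ s ∈ Finset.Icc 1 m', s ≤ N := fun s hs => by
      rw [Finset.mem_Icc] at hs; omega
    have hSN : ∀ s ∈ Finset.Icc 1 m, s ≤ N := fun s hs => by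
      rw [Finset.mem_Icc] at hs; omega
    -- existence of a partition of Icc 1 m' into K parts
    have hone : IsPartitionOf {Finset.Icc 1 m'} (Finset.Icc 1 m') 1 := by
      refine ⟨?_, ?_, Finset.sup_singleton, Finset.card_singleton _⟩
      · intro p hp
        rw [Finset.mem_singleton] at hp
        subst hp
        rw [← Finset.card_pos, hS'card]
        omega
      · rw [Finset.coe_singleton]
        exact Set.pairwiseDisjoint_singleton _ _
    obtain ⟨πE, hπE, _⟩ := refine hcost mono hS'N
      (le_max_right (cost (Finset.Icc 1 m')) 0) (K - 1) 1 {Finset.Icc 1 m'} hone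
      (by intro p hp; rw [Finset.mem_singleton] at hp; subst hp
          exact le_max_left _ _)
      (by rw [hS'card]; omega)
    rw [show 1 + (K - 1) = K by omega] at hπE
    refine le_csInf ⟨kObj cost πE, πE, hπE, rfl⟩ ?_
    rintro v ⟨π', hπ', rfl⟩
    -- restrict π' to S = Icc 1 m
    classical
    have hπ'ne : π'.Nonempty := Finset.card_pos.1 (by rw [hπ'.2.2.2]; omega)
    set S : Finset ℕ := Finset.Icc 1 m with hSdef
    set π₀ : Finset (Finset ℕ) := (π'.image (· ∩ S)).filter (· ≠ ∅) with hπ₀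
    have hmem₀ : ∀ q ∈ π₀, ∃ p ∈ π', q = p ∩ S ∧ q ≠ ∅ := by
      intro q hq
      rw [hπ₀, Finset.mem_filter, Finset.mem_image] at hq
      obtain ⟨⟨p, hp, rfl⟩, hne⟩ := hq
      exact ⟨p, hp, rfl, hne⟩
    have hpart₀ : IsPartitionOf π₀ S π₀.card := by
      refine ⟨?_, ?_, ?_, rfl⟩
      · intro q hq
        obtain ⟨p, hp, rfl, hne⟩ := hmem₀ q hq
        exact Finset.nonempty_iff_ne_empty.2 hne
      · intro A hA B hB hAB
        obtain ⟨p, hp, hAe, _⟩ := hmem₀ A (Finset.mem_coe.1 hA)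
        obtain ⟨q, hq, hBe, _⟩ := hmem₀ B (Finset.mem_coe.1 hB)
        have hpq : p ≠ q := by
          rintro rfl
          exact hAB (hAe.trans hBe.symm)
        have hdis : Disjoint (id p) (id q) := hπ'.2.1 hp hq hpq
        simp only [id] at hdis ⊢
        rw [hAe, hBe]
        exact hdis.mono Finset.inter_subset_left Finset.inter_subset_left
      · ext b
        rw [Finset.mem_sup]
        constructor
        · rintro ⟨q, hq, hb⟩
          obtain ⟨p, hp, rfl, _⟩ := hmem₀ q hq
          exact (Finset.mem_inter.1 hb).2
        · intro hb
          have hb' : b ∈ Finset.Icc 1 m' := by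
            rw [hSdef, Finset.mem_Icc] at hb
            rw [Finset.mem_Icc]
            omega
          rw [← hπ'.2.2.1, Finset.mem_sup] at hb'
          obtain ⟨p, hp, hbp⟩ := hb'
          refine ⟨p ∩ S, ?_, Finset.mem_inter.2 ⟨hbp, hb⟩⟩
          rw [hπ₀, Finset.mem_filter]
          refine ⟨Finset.mem_image_of_mem _ hp, ?_⟩
          intro hEq
          have : b ∈ p ∩ S := Finset.mem_inter.2 ⟨hbp, hb⟩
          rw [hEq] at this
          simp at this
    have hcost₀ : ∀ q ∈ π₀, cost q ≤ kObj cost π' := by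
      intro q hq
      obtain ⟨p, hp, rfl, hne⟩ := hmem₀ q hq
      have hpS' : p ⊆ Finset.Icc 1 m' := by
        rw [← hπ'.2.2.1]
        exact Finset.le_sup (f := id) hp
      have h1 : cost (p ∩ S) ≤ cost p := by
        refine cost_cut hcost mono (fun q hq => hS'N q (hpS' hq))
          (Finset.nonempty_iff_ne_empty.2 hne) Finset.inter_subset_left ?_
        intro u v w hu hw hv huv hvw
        have hu' := (Finset.mem_inter.1 hu).2
        have hw' := (Finset.mem_inter.1 hw).2
        rw [hSdef, Finset.mem_Icc] at hu' hw'
        refine Finset.mem_inter.2 ⟨hv, ?_⟩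
        rw [hSdef, Finset.mem_Icc]
        omega
      refine le_trans h1 ?_
      rw [kObj, dif_pos hπ'ne]
      exact Finset.le_sup' cost hp
    have ht : π₀.card ≤ K := by
      refine le_trans (Finset.card_filter_le _ _) (le_trans Finset.card_image_le ?_)
      rw [hπ'.2.2.2]
    obtain ⟨π₂, hπ₂, hcost₂⟩ := refine hcost mono hSN (kObj_nonneg hcost π')
      (K - π₀.card) π₀.card π₀ hpart₀ hcost₀ (by rw [hScard]; omega)
    rw [show π₀.card + (K - π₀.card) = K by omega] at hπ₂
    exact le_trans (CVal_le_kObj hcost hπ₂)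
      (kObj_le (kObj_nonneg hcost π') hcost₂)

end DPAux

/-- Unimodality of `g(j) = max(C_{j−1,k−1}, f({x_j,…,x_i}))` on `[2, i]`:
there is `l ∈ [2, i]` such that `g` is weakly decreasing on `[2, l]` and weakly
increasing on `[l+1, i]`. -/


theorem dp_line_unimodal (N : ℕ) (x : ℕ → Pt)
    (mono : ∀ i j : ℕ, i < j → j ≤ N → prec (x i) (x j))
    (cost : Finset ℕ → ℝ) (hcost : cost = cCost x ∨ cost = dCost x)
    (i k : ℕ) (hi : 2 ≤ i) (hiN : i ≤ N) (hk : 2 ≤ k) :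
    ∃ l : ℕ, 2 ≤ l ∧ l ≤ i ∧
      (∀ j j' : ℕ, 2 ≤ j → j ≤ j' → j' ≤ l →
        max (CVal cost (Finset.Icc 1 (j' - 1)) (k - 1)) (cost (Finset.Icc j' i))
          ≤ max (CVal cost (Finset.Icc 1 (j - 1)) (k - 1)) (cost (Finset.Icc j i))) ∧
      (∀ j j' : ℕ, l + 1 ≤ j → j ≤ j' → j' ≤ i →
        max (CVal cost (Finset.Icc 1 (j - 1)) (k - 1)) (cost (Finset.Icc j i))
          ≤ max (CVal cost (Finset.Icc 1 (j' - 1)) (k - 1)) (cost (Finset.Icc j' i))) := by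
  classical
  have hAmono : ∀ a b : ℕ, 2 ≤ a → a ≤ b → b ≤ i →
      CVal cost (Finset.Icc 1 (a - 1)) (k - 1) ≤ CVal cost (Finset.Icc 1 (b - 1)) (k - 1) :=
    fun a b h2 hab hbi =>
      DPAux.CVal_mono hcost mono (by omega) (by omega) (by omega)
  have hBanti : ∀ a b : ℕ, a ≤ b → b ≤ i →
      cost (Finset.Icc b i) ≤ cost (Finset.Icc a i) := by
    intro a b hab hbi
    refine DPAux.cost_cut hcost mono (fun q hq => ?_)
      (Finset.nonempty_Icc.2 hbi) (Finset.Icc_subset_Icc hab le_rfl) ?_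
    · rw [Finset.mem_Icc] at hq; omega
    · intro u v w hu hw hv huv hvw
      rw [Finset.mem_Icc] at hu hw hv ⊢
      omega
  set T : Finset ℕ := (Finset.Icc 2 i).filter
    (fun j => CVal cost (Finset.Icc 1 (j - 1)) (k - 1) ≤ cost (Finset.Icc j i)) with hT
  by_cases hTne : T.Nonempty
  · set l := T.max' hTne with hl
    have hlmem := T.max'_mem hTne
    obtain ⟨hmem1, hAlBl⟩ := Finset.mem_filter.1 hlmem
    rw [Finset.mem_Icc] at hmem1
    obtain ⟨hl2, hli⟩ := hmem1
    refine ⟨l, hl2, hli, ?_, ?_⟩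
    · intro j j' h2 hjj' hj'l
      apply max_le
      · refine le_trans ?_ (le_max_right _ _)
        calc CVal cost (Finset.Icc 1 (j' - 1)) (k - 1)
            ≤ CVal cost (Finset.Icc 1 (l - 1)) (k - 1) := hAmono j' l (by omega) hj'l hli
          _ ≤ cost (Finset.Icc l i) := hAlBl
          _ ≤ cost (Finset.Icc j' i) := hBanti j' l hj'l hli
          _ ≤ cost (Finset.Icc j i) := hBanti j j' hjj' (by omega)
      · exact le_trans (hBanti j j' hjj' (by omega)) (le_max_right _ _)
    · intro j j' hlj hjj' hj'i
      have hjT : j ∉ T := by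
        intro hjT
        have := T.le_max' j hjT
        omega
      have hBA : cost (Finset.Icc j i) ≤ CVal cost (Finset.Icc 1 (j - 1)) (k - 1) := by
        by_contra hco
        push_neg at hco
        exact hjT (by
          rw [hT, Finset.mem_filter, Finset.mem_Icc]
          exact ⟨⟨by omega, by omega⟩, hco.le⟩)
      apply max_le
      · exact le_trans (hAmono j j' (by omega) hjj' hj'i) (le_max_left _ _)
      · exact le_trans (le_trans hBA (hAmono j j' (by omega) hjj' hj'i)) (le_max_left _ _)
  · refine ⟨2, le_rfl, hi, ?_, ?_⟩
    · intro j j' h2 hjj' hj'l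
      have : j = j' := by omega
      subst this
      exact le_rfl
    · intro j j' hlj hjj' hj'i
      have hjT : j ∉ T := fun h => hTne ⟨j, h⟩
      have hBA : cost (Finset.Icc j i) ≤ CVal cost (Finset.Icc 1 (j - 1)) (k - 1) := by
        by_contra hco
        push_neg at hco
        exact hjT (by
          rw [hT, Finset.mem_filter, Finset.mem_Icc]
          exact ⟨⟨by omega, by omega⟩, hco.le⟩)
      apply max_le
      · exact le_trans (hAmono j j' (by omega) hjj' hj'i) (le_max_left _ _)
      · exact le_trans (le_trans hBA (hAmono j j' (by omega) hjj' hj'i)) (le_max_left _ _)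
end
end

section
/- Let z₁,…,z_N ∈ ℝ² with z_i ≺ z_j for all i < j, let K ≥ 2, and let OPT be the optimal K-center value. Define a greedy backward procedure: starting at index N, repeatedly take the largest interval cluster ending at the current index whose 1-center cost is at most OPT, producing breakpoints i₁ < i₂ < … < i_{K−1} partitioning [1,N] into K intervals. Then for any optimal interval partition with breakpoints i'₁ < … < i'_{K−1}, we have i_k ≤ i'_k for all k ∈ [1, K−1]. -/
noncomputable section

lemma myCost_nonneg (z : ℕ → Pt) (cost : Finset ℕ → ℝ)
    (hcost : cost = cCost z ∨ cost = dCost z) (P : Finset ℕ) : 0 ≤ cost P := by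
  rcases hcost with rfl | rfl
  · unfold cCost
    split
    · rename_i h
      apply Real.iInf_nonneg
      intro y
      exact le_trans dist_nonneg (Finset.le_sup' (fun j => dist (z j) y) h.choose_spec)
    · exact le_refl 0
  · unfold dCost
    split
    · rename_i h
      apply Finset.le_inf'
      intro c hc
      exact le_trans dist_nonneg (Finset.le_sup' (fun j => dist (z j) (z c)) hc)
    · exact le_refl 0

lemma myCost_empty (z : ℕ → Pt) (cost : Finset ℕ → ℝ)
    (hcost : cost = cCost z ∨ cost = dCost z) : cost ∅ = 0 := by
  rcases hcost with rfl | rfl <;> simp [cCost, dCost]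

lemma myDist_mono (N : ℕ) (z : ℕ → Pt)
    (mono : ∀ i j : ℕ, i < j → j ≤ N → prec (z i) (z j))
    (i j k : ℕ) (hij : i ≤ j) (hjk : j ≤ k) (hkN : k ≤ N) :
    dist (z i) (z j) ≤ dist (z i) (z k) := by
  rcases eq_or_lt_of_le hij with rfl | hij
  · rw [dist_self]; exact dist_nonneg
  rcases eq_or_lt_of_le hjk with rfl | hjk
  · exact le_refl _
  obtain ⟨a1, b1⟩ := mono i j hij (le_trans hjk.le hkN)
  obtain ⟨a2, b2⟩ := mono j k hjk hkN
  rw [EuclideanSpace.dist_eq, EuclideanSpace.dist_eq]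
  apply Real.sqrt_le_sqrt
  rw [Fin.sum_univ_two, Fin.sum_univ_two]
  have e : ∀ a b : ℝ, dist a b ^ 2 = (a - b) ^ 2 := fun a b => by
    rw [Real.dist_eq, sq_abs]
  rw [e, e, e, e]
  nlinarith [a1, a2, b1, b2]

lemma myCost_mono (N : ℕ) (z : ℕ → Pt)
    (mono : ∀ i j : ℕ, i < j → j ≤ N → prec (z i) (z j))
    (cost : Finset ℕ → ℝ) (hcost : cost = cCost z ∨ cost = dCost z)
    (a c d : ℕ) (hcd : c ≤ d) (hdN : d ≤ N) :
    cost (Finset.Icc a c) ≤ cost (Finset.Icc a d) := by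
  rcases le_or_gt a c with hac | hac
  swap
  · rw [Finset.Icc_eq_empty (by omega), myCost_empty z cost hcost]
    exact myCost_nonneg z cost hcost _
  have hP : (Finset.Icc a c).Nonempty := ⟨a, Finset.mem_Icc.mpr ⟨le_refl a, hac⟩⟩
  have hQ : (Finset.Icc a d).Nonempty := ⟨a, Finset.mem_Icc.mpr ⟨le_refl a, le_trans hac hcd⟩⟩
  have hsub : Finset.Icc a c ⊆ Finset.Icc a d := Finset.Icc_subset_Icc_right hcd
  rcases hcost with rfl | rfl
  · rw [cCost, cCost, dif_pos hP, dif_pos hQ]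
    apply ciInf_mono
    · refine ⟨0, ?_⟩
      rintro _ ⟨y, rfl⟩
      exact le_trans dist_nonneg (Finset.le_sup' (fun j => dist (z j) y) hP.choose_spec)
    · intro y
      exact Finset.sup'_mono _ hsub hP
  · rw [dCost, dCost, dif_pos hP, dif_pos hQ]
    obtain ⟨c0, hc0mem, hc0⟩ := Finset.exists_mem_eq_inf' hQ
      (fun c0 => (Finset.Icc a d).sup' hQ (fun j => dist (z j) (z c0)))
    rw [hc0]
    obtain ⟨hac0, hc0d⟩ := Finset.mem_Icc.mp hc0mem
    rcases le_or_gt c0 c with h | h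
    · refine le_trans (Finset.inf'_le _ (Finset.mem_Icc.mpr ⟨hac0, h⟩)) ?_
      exact Finset.sup'_mono _ hsub hP
    · refine le_trans (Finset.inf'_le _ (Finset.mem_Icc.mpr ⟨hac, le_refl c⟩)) ?_
      refine Finset.sup'_le _ _ fun j hj => ?_
      obtain ⟨haj, hjc⟩ := Finset.mem_Icc.mp hj
      refine le_trans (myDist_mono N z mono j c c0 hjc h.le (le_trans hc0d hdN)) ?_
      exact Finset.le_sup' (fun j => dist (z j) (z c0)) (hsub hj)

/-- The greedy backward procedure (taking, from the right, the largest interval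
cluster of cost at most `OPT`) produces breakpoints `b 1 < … < b (K−1)` that are
lower bounds of the breakpoints `b' 1 < … < b' (K−1)` of any optimal interval
partition: `b k ≤ b' k` for all `k ∈ [1, K−1]`. -/
theorem greedy_breakpoints_are_lower_bounds (N K : ℕ) (hK : 2 ≤ K) (hKN : K ≤ N)
    (z : ℕ → Pt) (mono : ∀ i j : ℕ, i < j → j ≤ N → prec (z i) (z j))
    (cost : Finset ℕ → ℝ) (hcost : cost = cCost z ∨ cost = dCost z)
    (OPT : ℝ) (hOPT : OPT = CVal cost (Finset.Icc 1 N) K)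
    -- `b` encodes the greedy breakpoints, with the convention `b K = N`:
    -- the cluster `[b k + 1, b (k+1)]` is the largest interval ending at
    -- `b (k+1)` whose cost is at most `OPT`.
    (b : ℕ → ℕ) (hbK : b K = N)
    (hgreedy : ∀ k : ℕ, 1 ≤ k → k ≤ K - 1 →
      cost (Finset.Icc (b k + 1) (b (k + 1))) ≤ OPT ∧
      ∀ m : ℕ, m < b k → ¬ cost (Finset.Icc (m + 1) (b (k + 1))) ≤ OPT)
    -- `b'` encodes the breakpoints of an arbitrary optimal interval partition,
    -- with clusters `[b' (k−1) + 1, b' k]` for `k ∈ [1, K]`, `b' 0 = 0`, `b' K = N`.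
    (b' : ℕ → ℕ) (hb'0 : b' 0 = 0) (hb'K : b' K = N)
    (hb'mono : ∀ k : ℕ, k < K → b' k < b' (k + 1))
    (hb'opt : ∀ k : ℕ, 1 ≤ k → k ≤ K →
      cost (Finset.Icc (b' (k - 1) + 1) (b' k)) ≤ OPT) :
    ∀ k : ℕ, 1 ≤ k → k ≤ K - 1 → b k ≤ b' k := by
  intro k hk1 hkK
  -- OPT is nonnegative
  have hOPT0 : 0 ≤ OPT := by
    rw [hOPT, CVal]
    apply Real.sInf_nonneg
    rintro x ⟨π, hπ, rfl⟩
    rw [kObj]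
    split
    · rename_i h
      exact le_trans (myCost_nonneg z cost hcost h.choose) (Finset.le_sup' _ h.choose_spec)
    · exact le_refl 0
  -- b' is monotone up to K, hence bounded by N
  have hb'le : ∀ m : ℕ, m ≤ K → b' m ≤ N := by
    have step : ∀ j : ℕ, ∀ m : ℕ, m + j ≤ K → b' m ≤ b' (m + j) := by
      intro j
      induction j with
      | zero => intro m _; exact le_refl _
      | succ j ih =>
        intro m hm
        have h1 := ih m (by omega)
        have h2 := (hb'mono (m + j) (by omega)).le
        exact h1.trans h2
    intro m hm
    have := step (K - m) m (by omega)
    rw [show m + (K - m) = K by omega, hb'K] at this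
    exact this
  -- main downward induction
  have main : ∀ d : ℕ, d ≤ K - 1 → b (K - d) ≤ b' (K - d) := by
    intro d
    induction d with
    | zero => intro _; simp [hbK, hb'K]
    | succ d ih =>
      intro hd
      have ihd := ih (by omega)
      set k0 := K - (d + 1) with hk0
      have hk01 : 1 ≤ k0 := by omega
      have hk0K1 : k0 ≤ K - 1 := by omega
      have hk0eq : k0 + 1 = K - d := by omega
      rw [← hk0eq] at ihd
      by_contra hcon
      push_neg at hcon
      have hg := hgreedy k0 hk01 hk0K1
      apply hg.2 (b' k0) hcon
      calc cost (Finset.Icc (b' k0 + 1) (b (k0 + 1)))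
          ≤ cost (Finset.Icc (b' k0 + 1) (b' (k0 + 1))) :=
            myCost_mono N z mono cost hcost _ _ _ ihd (hb'le (k0 + 1) (by omega))
        _ ≤ OPT := by
            have h := hb'opt (k0 + 1) (by omega) (by omega)
            rw [show k0 + 1 - 1 = k0 by omega] at h
            exact h
  have h := main (K - k) (by omega)
  rw [show K - (K - k) = k by omega] at h
  exact h
end
end

section
/- Let P ⊂ ℝ² be a finite set of at least 2 pairwise incomparable points (for distinct p, q: p ≺ q or q ≺ p), with extreme points x_i, x_j (minimal and maximal under ≺). Then for every x ∈ ℝ² with x ≠ (x_i + x_j)/2, we have max_{p ∈ P} ‖x − p‖ > (1/2)·‖x_i − x_j‖, and max_{p ∈ P} ‖(x_i + x_j)/2 − p‖ = (1/2)·‖x_i − x_j‖; hence x ↦ max_{p∈P} ‖x − p‖ has a unique minimizer, the midpoint of the extreme points. -/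
noncomputable section

/-- Weak Pareto dominance: `y ≼ z` iff `y ≺ z` or `y = z`. -/
def preceq (y z : Pt) : Prop := prec y z ∨ y = z

lemma mid_dist_le (a b p : Pt) (h0a : a 0 ≤ p 0) (h0b : p 0 ≤ b 0) (h1b : b 1 ≤ p 1)
    (h1a : p 1 ≤ a 1) : dist (midpoint ℝ a b) p ≤ dist a b / 2 := by
  have hm : ∀ i, midpoint ℝ a b i = (a i + b i) / 2 := by
    intro i; simp [midpoint_eq_smul_add]; ring
  have h2 : dist (midpoint ℝ a b) p ^ 2 ≤ (dist a b / 2) ^ 2 := by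
    rw [EuclideanSpace.dist_eq, EuclideanSpace.dist_eq, Real.sq_sqrt (by positivity),
      div_pow, Real.sq_sqrt (by positivity)]
    simp only [Fin.sum_univ_two, hm, Real.dist_eq]
    rw [sq_abs, sq_abs, sq_abs, sq_abs]
    nlinarith [sq_nonneg (a 0 - p 0), sq_nonneg (b 0 - p 0), sq_nonneg (a 1 - p 1),
      sq_nonneg (b 1 - p 1)]
  calc dist (midpoint ℝ a b) p = √(dist (midpoint ℝ a b) p ^ 2) :=
        (Real.sqrt_sq dist_nonneg).symm
    _ ≤ √((dist a b / 2) ^ 2) := Real.sqrt_le_sqrt h2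
    _ = dist a b / 2 := Real.sqrt_sq (by positivity)

/-- For a finite set `P` of at least two pairwise incomparable points of ℝ², with
extreme points `a ≼ p ≼ b` for all `p ∈ P`: every `x ≠ (a+b)/2` satisfies
`max_{p ∈ P} ‖x − p‖ > (1/2)‖a − b‖`, and the midpoint attains
`max_{p ∈ P} ‖(a+b)/2 − p‖ = (1/2)‖a − b‖`; hence the midpoint is the unique
minimizer of `x ↦ max_{p ∈ P} ‖x − p‖`. -/
theorem minimum_enclosing_ball_of_pareto_front (P : Finset Pt)
    (hcard : 2 ≤ P.card)
    (hinc : ∀ p ∈ P, ∀ q ∈ P, p ≠ q → prec p q ∨ prec q p)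
    (a b : Pt) (ha : a ∈ P) (hb : b ∈ P)
    (hext : ∀ p ∈ P, preceq a p ∧ preceq p b) :
    (∀ x : Pt, x ≠ midpoint ℝ a b →
      (1 / 2) * dist a b
        < P.sup' (Finset.card_pos.mp (by omega)) (fun p => dist x p)) ∧
    P.sup' (Finset.card_pos.mp (by omega)) (fun p => dist (midpoint ℝ a b) p)
      = (1 / 2) * dist a b := by
  have hne : P.Nonempty := Finset.card_pos.mp (by omega)
  constructor
  · intro x hx
    by_contra h
    push_neg at h
    have hxa : dist x a ≤ 1 / 2 * dist a b :=
      le_trans (Finset.le_sup' (fun p => dist x p) ha) h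
    have hxb : dist x b ≤ 1 / 2 * dist a b :=
      le_trans (Finset.le_sup' (fun p => dist x p) hb) h
    have htri : dist a b ≤ dist a x + dist x b := dist_triangle a x b
    rw [dist_comm a x] at htri
    have h1 : dist x a = dist a b / 2 := by linarith
    have h2 : dist x b = dist a b / 2 := by linarith
    exact hx (eq_midpoint_of_dist_eq_half (by rw [dist_comm]; exact h1) h2)
  · apply le_antisymm
    · apply Finset.sup'_le
      intro p hp
      rcases hext p hp with ⟨h1, h2⟩
      have hb2 : dist a b / 2 = 1 / 2 * dist a b := by ring
      rw [← hb2]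
      rcases h1 with h1 | rfl
      · rcases h2 with h2 | rfl
        · exact mid_dist_le a b p h1.1.le h2.1.le h2.2.le h1.2.le
        · rw [dist_midpoint_right]; norm_num; linarith
      · rw [dist_midpoint_left]; norm_num; linarith
    · have := Finset.le_sup' (fun p => dist (midpoint ℝ a b) p) ha
      rw [dist_midpoint_left] at this
      calc (1:ℝ)/2 * dist a b = ‖(2:ℝ)‖⁻¹ * dist a b := by norm_num
        _ ≤ _ := this
end
end
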